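/- arXiv:1603.09518 — 6 statements merged into one kernel-verified Lean document; each statement's English description precedes it below -/
import Mathlib

section
/- Let Γ be a finite connected simple graph in which no vertex is a singleton twin, and suppose the twin relation partitions V(Γ) into n twin classes of sizes m₁, m₂, …, m_n. Then the metric dimension of Γ equals (Σ_{i=1}^{n} m_i) − n. -/
open SimpleGraph

/-- `W` is a resolving set for the graph `Γ`: any two distinct vertices are
distinguished by their distance to some element of `W`. -/
def IsResolvingSet {V : Type*} (Γ : SimpleGraph V) (W : Set V) : Prop :=
  ∀ u v : V, u ≠ v → ∃ w ∈ W, Γ.dist u w ≠ Γ.dist v w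

/-- The metric dimension of a graph: the least cardinality of a resolving set. -/
noncomputable def metricDim {V : Type*} (Γ : SimpleGraph V) : ℕ :=
  sInf {n | ∃ W : Set V, W.Finite ∧ W.ncard = n ∧ IsResolvingSet Γ W}

/-- A minimal resolving set: a resolving set no proper subset of which resolves. -/
def IsMinimalResolvingSet {V : Type*} (Γ : SimpleGraph V) (W : Set V) : Prop :=
  IsResolvingSet Γ W ∧ ∀ W' : Set V, W' ⊂ W → ¬ IsResolvingSet Γ W'

/-- Two vertices are twins if they have the same open neighborhood or the same
closed neighborhood. -/
def AreTwins {V : Type*} (Γ : SimpleGraph V) (u v : V) : Prop :=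
  Γ.neighborSet u = Γ.neighborSet v ∨
    insert u (Γ.neighborSet u) = insert v (Γ.neighborSet v)

/-- The twin class of a vertex. -/
def twinClass {V : Type*} (Γ : SimpleGraph V) (u : V) : Set V :=
  {v | AreTwins Γ u v}

/-- The number of twin classes of a graph. -/
noncomputable def twinClassCount {V : Type*} (Γ : SimpleGraph V) : ℕ :=
  {S : Set V | ∃ u : V, S = twinClass Γ u}.ncard

/-- Resolving sets of `Γ` have the exchange property. -/
def HasExchangeProperty {V : Type*} (Γ : SimpleGraph V) : Prop :=
  ∀ W₁ W₂ : Set V, IsMinimalResolvingSet Γ W₁ → IsMinimalResolvingSet Γ W₂ →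
    ∀ u ∈ W₁, ∃ v ∈ W₂, IsMinimalResolvingSet Γ ((W₁ \ {u}) ∪ {v})

/-- The (undirected) power graph of a group `G`: distinct `x`, `y` are adjacent
iff one is a positive power of the other. -/
def powerGraph (G : Type*) [Group G] : SimpleGraph G :=
  SimpleGraph.fromRel (fun x y => ∃ m : ℕ, 0 < m ∧ y = x ^ m)

/-- `R{x,y}`: the set of vertices having different distances to `x` and `y`. -/
def Rset {V : Type*} (Γ : SimpleGraph V) (x y : V) : Set V :=
  {z | Γ.dist x z ≠ Γ.dist y z}

/-!
Twins are at equal distance from every other vertex, so a resolving set contains all but at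
most one vertex of each twin class, whence `β(Γ) ≥ |V| - n`. Conversely, removing one
representative of each class leaves a resolving set: two twins are separated by whichever of
them remains, and two non-twins by a vertex adjacent to exactly one of them; if that vertex was
removed, one of its twins (there is one, as no class is a singleton) does the same job.
-/

open Function

section Twins

variable {V : Type*} {Γ : SimpleGraph V} {u v w x y z z' : V}

theorem AreTwins.refl (u : V) : AreTwins Γ u u := Or.inl rfl

theorem mem_twinClass : v ∈ twinClass Γ u ↔ AreTwins Γ u v := Iff.rfl

theorem self_mem_twinClass (u : V) : u ∈ twinClass Γ u := AreTwins.refl u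

theorem AreTwins.symm (h : AreTwins Γ u v) : AreTwins Γ v u :=
  h.imp Eq.symm Eq.symm

theorem AreTwins.trans (h₁ : AreTwins Γ u v) (h₂ : AreTwins Γ v w) : AreTwins Γ u w := by
  unfold AreTwins at *
  simp only [Set.ext_iff, Set.mem_insert_iff, mem_neighborSet] at *
  rcases h₁ with h₁ | h₁ <;> rcases h₂ with h₂ | h₂ <;> grind [Adj.symm, SimpleGraph.irrefl]

theorem areTwins_of_mem_twinClass (hx : x ∈ twinClass Γ u) (hy : y ∈ twinClass Γ u) :
    AreTwins Γ x y :=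
  (mem_twinClass.mp hx).symm.trans hy

theorem exists_adj_ne_of_not_areTwins (h : ¬AreTwins Γ u v) :
    ∃ z, z ≠ u ∧ z ≠ v ∧ ¬(Γ.Adj u z ↔ Γ.Adj v z) := by
  unfold AreTwins at h
  simp only [Set.ext_iff, Set.mem_insert_iff, mem_neighborSet, not_or, not_forall] at h
  obtain ⟨⟨a, ha⟩, ⟨b, hb⟩⟩ := h
  by_cases hadj : Γ.Adj u v
  · refine ⟨b, ?_, ?_, ?_⟩ <;> grind [Adj.symm]
  · refine ⟨a, ?_, ?_, ?_⟩ <;> grind [Adj.symm, SimpleGraph.irrefl]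

theorem exists_dist_ne_of_not_areTwins (h : ¬AreTwins Γ u v) :
    ∃ z, z ≠ u ∧ z ≠ v ∧ Γ.dist u z ≠ Γ.dist v z := by
  obtain ⟨z, hzu, hzv, hadj⟩ := exists_adj_ne_of_not_areTwins h
  refine ⟨z, hzu, hzv, fun hdist => hadj ?_⟩
  rw [← dist_eq_one_iff_adj, ← dist_eq_one_iff_adj, hdist]

-- A geodesic from `y` to `z` starts with a vertex of `N[x]`, so it can be rerouted through `x`.
theorem AreTwins.dist_le (hconn : Γ.Connected) (h : AreTwins Γ x y) (hzy : z ≠ y) :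
    Γ.dist x z ≤ Γ.dist y z := by
  obtain ⟨p, hp⟩ := hconn.exists_walk_length_eq_dist y z
  obtain ⟨b, hyb, q, rfl⟩ := p.exists_eq_cons_of_ne hzy.symm
  have hb : b = x ∨ Γ.Adj x b := by
    unfold AreTwins at h
    simp only [Set.ext_iff, Set.mem_insert_iff, mem_neighborSet] at h
    grind [Adj.ne']
  rw [← hp, Walk.length_cons]
  rcases hb with rfl | hxb
  · exact (Γ.dist_le q).trans (Nat.le_succ _)
  · exact Γ.dist_le (Walk.cons hxb q)

theorem AreTwins.dist_eq (hconn : Γ.Connected) (h : AreTwins Γ x y) (hzx : z ≠ x)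
    (hzy : z ≠ y) : Γ.dist x z = Γ.dist y z :=
  (h.dist_le hconn hzy).antisymm (h.symm.dist_le hconn hzx)

theorem dist_ne_dist_self (hconn : Γ.Connected) (huv : u ≠ v) : Γ.dist u u ≠ Γ.dist v u := by
  rw [dist_self]
  exact (hconn.pos_dist_of_ne huv.symm).ne

theorem AreTwins.dist_ne_dist (hconn : Γ.Connected) (h : AreTwins Γ z z') (huv : u ≠ v)
    (hzu : z ≠ u) (hzv : z ≠ v) (hz : Γ.dist u z ≠ Γ.dist v z) :
    Γ.dist u z' ≠ Γ.dist v z' := by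
  by_cases hz'u : z' = u
  · subst hz'u
    exact dist_ne_dist_self hconn huv
  by_cases hz'v : z' = v
  · subst hz'v
    exact (dist_ne_dist_self hconn huv.symm).symm
  have hu := h.dist_eq hconn (Ne.symm hzu) (Ne.symm hz'u)
  have hv := h.dist_eq hconn (Ne.symm hzv) (Ne.symm hz'v)
  rwa [dist_comm, ← hu, dist_comm (u := v), ← hv, dist_comm (u := z), dist_comm (u := z)]

end Twins

section Resolving

variable {V : Type*} {Γ : SimpleGraph V} {W : Set V}

theorem IsResolvingSet.eq_of_areTwins (hconn : Γ.Connected) (hW : IsResolvingSet Γ W)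
    {a b : V} (hab : AreTwins Γ a b) (ha : a ∉ W) (hb : b ∉ W) : a = b := by
  by_contra hne
  obtain ⟨w, hw, hdist⟩ := hW a b hne
  exact hdist (hab.dist_eq hconn (ne_of_mem_of_not_mem hw ha) (ne_of_mem_of_not_mem hw hb))

theorem isResolvingSet_compl (hconn : Γ.Connected) (hns : ∀ u : V, twinClass Γ u ≠ {u})
    {R : Set V} (hR : ∀ a ∈ R, ∀ b ∈ R, AreTwins Γ a b → a = b) : IsResolvingSet Γ Rᶜ := by
  intro u v huv
  by_cases htwin : AreTwins Γ u v
  · by_cases hu : u ∈ R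
    · exact ⟨v, fun hv => huv (hR u hu v hv htwin), (dist_ne_dist_self hconn huv.symm).symm⟩
    · exact ⟨u, hu, dist_ne_dist_self hconn huv⟩
  obtain ⟨z, hzu, hzv, hz⟩ := exists_dist_ne_of_not_areTwins htwin
  by_cases hzR : z ∈ R
  · obtain ⟨z', hzz', hz'z⟩ :=
      ((Set.nontrivial_iff_ne_singleton (self_mem_twinClass z)).mpr (hns z)).exists_ne z
    rw [mem_twinClass] at hzz'
    exact ⟨z', fun hz'R => hz'z (hR z' hz'R z hzR hzz'.symm),
      hzz'.dist_ne_dist hconn huv hzu hzv hz⟩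
  · exact ⟨z, hzR, hz⟩

theorem IsResolvingSet.card_sub_le_ncard [Finite V] {ι : Type*} [Finite ι] (hconn : Γ.Connected)
    (hW : IsResolvingSet Γ W) (cls : V → ι) (hcls : ∀ x y, cls x = cls y → AreTwins Γ x y) :
    Nat.card V - Nat.card ι ≤ W.ncard := by
  have hcompl : Wᶜ.ncard ≤ (Set.univ : Set ι).ncard :=
    Set.ncard_le_ncard_of_injOn cls (fun _ _ => Set.mem_univ _)
      fun a ha b hb hab => hW.eq_of_areTwins hconn (hcls a b hab) ha hb
  have hsplit := Set.ncard_add_ncard_compl W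
  rw [Set.ncard_univ] at hcompl
  omega

theorem metricDim_eq_of_isResolvingSet {k : ℕ} (hWfin : W.Finite) (hW : IsResolvingSet Γ W)
    (hk : W.ncard = k) (hmin : ∀ W' : Set V, W'.Finite → IsResolvingSet Γ W' → k ≤ W'.ncard) :
    metricDim Γ = k := by
  have hk_mem : k ∈ {n | ∃ W : Set V, W.Finite ∧ W.ncard = n ∧ IsResolvingSet Γ W} :=
    ⟨W, hWfin, hk, hW⟩
  refine (Nat.sInf_le hk_mem).antisymm (le_csInf ⟨k, hk_mem⟩ ?_)
  rintro _ ⟨W', hfin, rfl, hW'⟩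
  exact hmin W' hfin hW'

end Resolving

theorem metricDim_eq_card_sub_card_of_twinClasses {V ι : Type*} [Finite V] [Finite ι]
    {Γ : SimpleGraph V} (hconn : Γ.Connected) (hns : ∀ u : V, twinClass Γ u ≠ {u})
    (c : ι → V) (hdisj : Pairwise (Disjoint on fun i => twinClass Γ (c i)))
    (hcover : ⋃ i, twinClass Γ (c i) = Set.univ) :
    metricDim Γ = Nat.card V - Nat.card ι := by
  have eq_of_mem {i j : ι} {x : V} (hi : x ∈ twinClass Γ (c i)) (hj : x ∈ twinClass Γ (c j)) :
      i = j :=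
    hdisj.eq (Set.not_disjoint_iff.mpr ⟨x, hi, hj⟩)
  have hc_inj : c.Injective := fun i j hij =>
    eq_of_mem (self_mem_twinClass (c i)) (hij ▸ self_mem_twinClass (c i))
  have hcls (x : V) : ∃ i, x ∈ twinClass Γ (c i) := Set.mem_iUnion.mp (hcover ▸ Set.mem_univ x)
  choose cls hcls using hcls
  refine metricDim_eq_of_isResolvingSet (W := (Set.range c)ᶜ) (Set.toFinite _) ?_ ?_ ?_
  · refine isResolvingSet_compl hconn hns ?_
    rintro _ ⟨i, rfl⟩ _ ⟨j, rfl⟩ hij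
    rw [eq_of_mem (mem_twinClass.mpr hij) (self_mem_twinClass (c j))]
  · have hsplit := Set.ncard_add_ncard_compl (Set.range c)
    rw [Set.ncard_range_of_injective hc_inj] at hsplit
    omega
  · intro W _ hW
    exact hW.card_sub_le_ncard hconn cls fun x y hxy =>
      areTwins_of_mem_twinClass (hcls x) (hxy ▸ hcls y)

/-- For a finite connected graph with no singleton twin whose twin
classes have sizes `m₁, …, m_n`, the metric dimension equals `(∑ mᵢ) - n`. -/
theorem metricDim_eq_sum_sub_of_no_singleton_twin
    {V : Type*} [Fintype V] (Γ : SimpleGraph V) (hconn : Γ.Connected)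
    (hns : ∀ u : V, twinClass Γ u ≠ {u})
    (n : ℕ) (C : Fin n → Set V) (m : Fin n → ℕ)
    (hC : ∀ i, ∃ u : V, C i = twinClass Γ u)
    (hsize : ∀ i, (C i).ncard = m i)
    (hdisj : ∀ i j, i ≠ j → Disjoint (C i) (C j))
    (hcover : (⋃ i, C i) = Set.univ) :
    metricDim Γ = (∑ i, m i) - n := by
  have hsum : ∑ i, m i = Nat.card V := by
    rw [← Set.ncard_univ, ← hcover, Set.ncard_iUnion_of_finite (fun _ => Set.toFinite _) hdisj,
      finsum_eq_sum_of_fintype]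
    simp only [hsize]
  choose c hc using hC
  obtain rfl : C = fun i => twinClass Γ (c i) := funext hc
  rw [hsum, metricDim_eq_card_sub_card_of_twinClasses hconn hns c hdisj hcover, Nat.card_fin]
end

section
/- Let n ≥ 3 and let D_{2n} be the dihedral group of order 2n. Then β(P_{D_{2n}}) = β(P_{Z_n}) + n − 2, where Z_n is the cyclic group of order n. -/
open SimpleGraph

/-!
In the power graph of a finite group the identity is adjacent to every other vertex, so all
distances are at most `2`, and `W` resolves iff any two vertices outside `W` have different
neighbourhoods in `W`. The power graph of `D_{2n}` is that of `Z_n` on the rotations, with the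
`n` reflections attached as pendant vertices at the identity. The pendants are pairwise twins,
and so are the three universal vertices `0, 1, -1` of `Z_n`, so a resolving set misses at most
one vertex of each family. Dropping a universal vertex from a resolving set of `Z_n` and adding
all reflections but one resolves `D_{2n}`; conversely the rotations of a resolving set of
`D_{2n}`, together with at most one further vertex, resolve `Z_n`.
-/

section UniversalVertex

variable {V : Type*} {Γ : SimpleGraph V}

def IsUniversalVertex (Γ : SimpleGraph V) (c : V) : Prop :=
  ∀ v, v ≠ c → Γ.Adj v c

def SeparatesOn (Γ : SimpleGraph V) (W X : Set V) : Prop :=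
  ∀ u ∈ X, ∀ v ∈ X, u ≠ v → u ∉ W → v ∉ W → ∃ w ∈ W, ¬(Γ.Adj u w ↔ Γ.Adj v w)

def DominatesOn (Γ : SimpleGraph V) (D X : Set V) : Prop :=
  ∀ v ∈ X, v ∉ D → ∃ w ∈ D, Γ.Adj v w

lemma SeparatesOn.mono {W W' X X' : Set V} (h : SeparatesOn Γ W X) (hW : W ⊆ W')
    (hX : X' ⊆ X) : SeparatesOn Γ W' X' := by
  intro u hu v hv huv huW hvW
  obtain ⟨w, hw, hsep⟩ := h u (hX hu) v (hX hv) huv (fun h => huW (hW h)) (fun h => hvW (hW h))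
  exact ⟨w, hW hw, hsep⟩

namespace IsUniversalVertex

variable {c : V}

lemma reachable (hc : IsUniversalVertex Γ c) (u v : V) : Γ.Reachable u v := by
  have h : ∀ x, Γ.Reachable x c := fun x => by
    by_cases hx : x = c
    · exact hx ▸ Reachable.rfl
    · exact (hc x hx).reachable
  exact (h u).trans (h v).symm

lemma dist_eq_two (hc : IsUniversalVertex Γ c) {u v : V} (huv : u ≠ v) (h : ¬Γ.Adj u v) :
    Γ.dist u v = 2 := by
  have hu : u ≠ c := by rintro rfl; exact h (hc v (Ne.symm huv)).symm
  have hv : v ≠ c := by rintro rfl; exact h (hc u huv)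
  have hle : Γ.dist u v ≤ 2 := dist_le (.cons (hc u hu) (.cons (hc v hv).symm .nil))
  have h0 : Γ.dist u v ≠ 0 := fun h0 => huv ((hc.reachable u v).dist_eq_zero_iff.1 h0)
  have h1 : Γ.dist u v ≠ 1 := fun h1 => h (dist_eq_one_iff_adj.1 h1)
  omega

lemma dist_eq_dist_iff (hc : IsUniversalVertex Γ c) {u v w : V} (hu : u ≠ w) (hv : v ≠ w) :
    Γ.dist u w = Γ.dist v w ↔ (Γ.Adj u w ↔ Γ.Adj v w) := by
  by_cases hu' : Γ.Adj u w <;> by_cases hv' : Γ.Adj v w <;>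
    simp [hu', hv', dist_eq_one_iff_adj.2, hc.dist_eq_two hu, hc.dist_eq_two hv]

lemma isResolvingSet_iff (hc : IsUniversalVertex Γ c) {W : Set V} :
    IsResolvingSet Γ W ↔ SeparatesOn Γ W Set.univ := by
  constructor
  · intro hW u _ v _ huv hu hv
    obtain ⟨w, hw, hd⟩ := hW u v huv
    exact ⟨w, hw, by rwa [← hc.dist_eq_dist_iff (ne_of_mem_of_not_mem hw hu).symm
      (ne_of_mem_of_not_mem hw hv).symm]⟩
  · intro hW u v huv
    have dist_ne_zero : ∀ {x y}, x ≠ y → Γ.dist x y ≠ 0 := fun hxy h0 =>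
      hxy ((hc.reachable _ _).dist_eq_zero_iff.1 h0)
    by_cases hu : u ∈ W
    · exact ⟨u, hu, by rw [SimpleGraph.dist_self]; exact (dist_ne_zero (Ne.symm huv)).symm⟩
    by_cases hv : v ∈ W
    · exact ⟨v, hv, by rw [SimpleGraph.dist_self]; exact dist_ne_zero huv⟩
    obtain ⟨w, hw, hsep⟩ := hW u trivial v trivial huv hu hv
    exact ⟨w, hw, by rwa [Ne, hc.dist_eq_dist_iff (ne_of_mem_of_not_mem hw hu).symm
      (ne_of_mem_of_not_mem hw hv).symm]⟩

lemma metricDim_le [Finite V] (hc : IsUniversalVertex Γ c) {W : Set V}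
    (hW : SeparatesOn Γ W Set.univ) : metricDim Γ ≤ W.ncard :=
  Nat.sInf_le ⟨W, W.toFinite, rfl, hc.isResolvingSet_iff.2 hW⟩

lemma exists_separatesOn_ncard_eq_metricDim [Finite V] (hc : IsUniversalVertex Γ c) :
    ∃ W, SeparatesOn Γ W Set.univ ∧ W.ncard = metricDim Γ := by
  have hne : {k | ∃ W : Set V, W.Finite ∧ W.ncard = k ∧ IsResolvingSet Γ W}.Nonempty :=
    ⟨_, Set.univ, Set.toFinite _, rfl, hc.isResolvingSet_iff.2 fun _ _ _ _ _ h => (h trivial).elim⟩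
  obtain ⟨W, -, hcard, hW⟩ := Nat.sInf_mem hne
  exact ⟨W, hc.isResolvingSet_iff.1 hW, hcard⟩

lemma areTwins {d : V} (hc : IsUniversalVertex Γ c) (hd : IsUniversalVertex Γ d) :
    AreTwins Γ c d := by
  have hclosed : ∀ {x}, IsUniversalVertex Γ x → insert x (Γ.neighborSet x) = Set.univ :=
    fun {x} hx => Set.eq_univ_of_forall fun y => by
      by_cases hy : y = x
      · exact .inl hy
      · exact .inr (hx y hy).symm
  exact .inr (by rw [hclosed hc, hclosed hd])

lemma dominatesOn (hc : IsUniversalVertex Γ c) {D X : Set V} (hcD : c ∈ D) :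
    DominatesOn Γ D X :=
  fun v _ hv => ⟨c, hcD, hc v (ne_of_mem_of_not_mem hcD hv).symm⟩

lemma separatesOn_sdiff (hc : IsUniversalVertex Γ c) {W X : Set V}
    (hW : SeparatesOn Γ W X) : SeparatesOn Γ (W \ {c}) (X \ {c}) := by
  intro u ⟨hu, huc⟩ v ⟨hv, hvc⟩ huv huW hvW
  obtain ⟨w, hw, hsep⟩ := hW u hu v hv huv (fun h => huW ⟨h, huc⟩) (fun h => hvW ⟨h, hvc⟩)
  refine ⟨w, ⟨hw, ?_⟩, hsep⟩
  rintro rfl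
  exact hsep (iff_of_true (hc u huc) (hc v hvc))

end IsUniversalVertex

lemma SeparatesOn.mem_or_mem_of_areTwins {W : Set V} {u v : V}
    (hW : SeparatesOn Γ W Set.univ) (htwins : AreTwins Γ u v) (huv : u ≠ v) : u ∈ W ∨ v ∈ W := by
  by_contra! h
  obtain ⟨w, hw, hsep⟩ := hW u trivial v trivial huv h.1 h.2
  have hwu : w ≠ u := ne_of_mem_of_not_mem hw h.1
  have hwv : w ≠ v := ne_of_mem_of_not_mem hw h.2
  apply hsep
  rw [← mem_neighborSet, ← mem_neighborSet]
  rcases htwins with hN | hN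
  · rw [hN]
  · have := congrArg (w ∈ ·) hN
    simpa [hwu, hwv] using this

/-- The vertices `z ≠ c` that `S` does not tell apart from `c` are adjacent to all of `S`,
so `S` tells no two of them apart: there is at most one, and adding it to `S` suffices. -/
lemma IsUniversalVertex.exists_separatesOn_univ {c : V} (hc : IsUniversalVertex Γ c)
    {S : Set V} (hS : SeparatesOn Γ S {c}ᶜ) :
    ∃ S', SeparatesOn Γ S' Set.univ ∧ S'.ncard ≤ S.ncard + 1 := by
  set T := {z | z ≠ c ∧ z ∉ S ∧ ∀ w ∈ S, Γ.Adj z w}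
  have hT : T.Subsingleton := by
    rintro x ⟨hxc, hxS, hx⟩ y ⟨hyc, hyS, hy⟩
    by_contra hxy
    obtain ⟨w, hw, hsep⟩ := hS x hxc y hyc hxy hxS hyS
    exact hsep (iff_of_true (hx w hw) (hy w hw))
  have hc_sep : ∀ v, v ≠ c → v ∉ S ∪ T → ∃ w ∈ S ∪ T, ¬(Γ.Adj c w ↔ Γ.Adj v w) := by
    intro v hvc hv
    obtain ⟨w, hw, hvw⟩ : ∃ w ∈ S, ¬Γ.Adj v w := by
      by_contra! h
      exact hv (.inr ⟨hvc, fun h' => hv (.inl h'), h⟩)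
    have hwc : w ≠ c := by rintro rfl; exact hvw (hc v hvc)
    exact ⟨w, .inl hw, fun h => hvw (h.1 (hc w hwc).symm)⟩
  refine ⟨S ∪ T, ?_, ?_⟩
  · intro u _ v _ huv hu hv
    by_cases huc : u = c
    · subst huc
      exact hc_sep v (Ne.symm huv) hv
    by_cases hvc : v = c
    · subst hvc
      obtain ⟨w, hw, h⟩ := hc_sep u huc hu
      exact ⟨w, hw, fun h' => h h'.symm⟩
    exact hS.mono Set.subset_union_left subset_rfl u huc v hvc huv hu hv
  · calc (S ∪ T).ncard ≤ S.ncard + T.ncard := Set.ncard_union_le S T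
      _ ≤ S.ncard + 1 := by gcongr; exact (Set.ncard_le_one hT.finite).2 hT

/-- A vertex `z ∉ S` other than `c` is told apart from `a` by the vertex of `S` that tells it
apart from `c`. -/
lemma IsUniversalVertex.separatesOn_compl_sdiff {a c : V} (ha : IsUniversalVertex Γ a)
    (hc : IsUniversalVertex Γ c) {S : Set V} (hS : SeparatesOn Γ S Set.univ) (hcS : c ∉ S) :
    SeparatesOn Γ (S \ {a}) {c}ᶜ := by
  have ha_sep : ∀ z, z ≠ c → z ≠ a → z ∉ S → ∃ w ∈ S \ {a}, ¬(Γ.Adj a w ↔ Γ.Adj z w) := by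
    intro z hzc hza hzS
    obtain ⟨w, hw, hsep⟩ := hS c trivial z trivial hzc.symm hcS hzS
    have hzw : ¬Γ.Adj z w := fun h => hsep (iff_of_true (hc w (ne_of_mem_of_not_mem hw hcS)).symm h)
    have hwa : w ≠ a := by rintro rfl; exact hzw (ha z hza)
    exact ⟨w, ⟨hw, hwa⟩, fun h => hzw (h.1 (ha w hwa).symm)⟩
  intro u hu v hv huv huS hvS
  by_cases hua : u = a
  · subst hua
    exact ha_sep v hv (Ne.symm huv) (fun h => hvS ⟨h, Ne.symm huv⟩)
  by_cases hva : v = a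
  · subst hva
    obtain ⟨w, hw, h⟩ := ha_sep u hu hua (fun h => huS ⟨h, hua⟩)
    exact ⟨w, hw, fun h' => h h'.symm⟩
  exact ha.separatesOn_sdiff hS u ⟨trivial, hua⟩ v ⟨trivial, hva⟩ huv huS hvS

/-- A resolving set contains two of the three pairwise twin vertices `a, b, c`; removing `c`,
or `a` if `c` is missing, leaves a set containing a universal vertex other than `c`. -/
lemma exists_separatesOn_compl_of_separatesOn_univ [Finite V] {a b c : V}
    (ha : IsUniversalVertex Γ a) (hb : IsUniversalVertex Γ b) (hc : IsUniversalVertex Γ c)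
    (hab : a ≠ b) (hac : a ≠ c) (hbc : b ≠ c) {S' : Set V} (hS' : SeparatesOn Γ S' Set.univ) :
    ∃ S, SeparatesOn Γ S {c}ᶜ ∧ DominatesOn Γ (S \ {c}) {c}ᶜ ∧ S.ncard + 1 = S'.ncard := by
  by_cases hcS : c ∈ S'
  · obtain ⟨y, hyS, hyc, hy⟩ : ∃ y ∈ S', y ≠ c ∧ IsUniversalVertex Γ y := by
      rcases hS'.mem_or_mem_of_areTwins (ha.areTwins hb) hab with h | h
      exacts [⟨a, h, hac, ha⟩, ⟨b, h, hbc, hb⟩]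
    refine ⟨S' \ {c}, ?_, hy.dominatesOn ⟨⟨hyS, hyc⟩, hyc⟩,
      Set.ncard_sdiff_singleton_add_one hcS⟩
    simpa only [Set.compl_eq_univ_sdiff] using hc.separatesOn_sdiff hS'
  · have haS := (hS'.mem_or_mem_of_areTwins (ha.areTwins hc) hac).resolve_right hcS
    have hbS := (hS'.mem_or_mem_of_areTwins (hb.areTwins hc) hbc).resolve_right hcS
    exact ⟨S' \ {a}, ha.separatesOn_compl_sdiff hc hS' hcS,
      hb.dominatesOn ⟨⟨hbS, hab.symm⟩, hbc⟩, Set.ncard_sdiff_singleton_add_one haS⟩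

end UniversalVertex

section PendantExtension

variable {V V' : Type*} {Γ : SimpleGraph V} {Γ' : SimpleGraph V'}

lemma Set.ncard_eq_ncard_preimage_add_ncard_sdiff_range {f : V → V'} (hf : f.Injective)
    (W : Set V') (hW : W.Finite := by toFinite_tac) :
    W.ncard = (f ⁻¹' W).ncard + (W \ Set.range f).ncard := by
  rw [← Set.ncard_image_of_injective _ hf, Set.image_preimage_eq_inter_range,
    Set.ncard_inter_add_ncard_sdiff_eq_ncard W _ hW]

lemma Set.ncard_image_union_compl_range_sdiff_singleton [Finite V'] {f : V → V'}
    (hf : f.Injective) (S : Set V) {p : V'} (hp : p ∉ Set.range f) :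
    (f '' S ∪ ((Set.range f)ᶜ \ {p})).ncard + 1 = S.ncard + (Set.range f)ᶜ.ncard := by
  have hdisj : Disjoint (f '' S) ((Set.range f)ᶜ \ {p}) :=
    (disjoint_compl_right.mono_left (Set.image_subset_range _ _)).mono_right Set.sdiff_subset
  rw [Set.ncard_union_eq hdisj, Set.ncard_image_of_injective _ hf, add_assoc,
    Set.ncard_sdiff_singleton_add_one hp]

def IsPendantExtension (f : Γ ↪g Γ') (c : V) : Prop :=
  ∀ p ∉ Set.range f, Γ'.neighborSet p = {f c}

namespace IsPendantExtension

variable {f : Γ ↪g Γ'} {c : V}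

lemma adj_iff (hf : IsPendantExtension f c) {p x : V'} (hp : p ∉ Set.range f) :
    Γ'.Adj p x ↔ x = f c := by
  rw [← mem_neighborSet, hf p hp, Set.mem_singleton_iff]

lemma isUniversalVertex (hf : IsPendantExtension f c) (hc : IsUniversalVertex Γ c) :
    IsUniversalVertex Γ' (f c) := by
  intro x hx
  by_cases hxf : x ∈ Set.range f
  · obtain ⟨v, rfl⟩ := hxf
    exact f.map_adj_iff.2 (hc v (fun h => hx (h ▸ rfl)))
  · exact (hf.adj_iff hxf).2 rfl

lemma separatesOn_preimage (hf : IsPendantExtension f c) {W : Set V'}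
    (hW : SeparatesOn Γ' W Set.univ) : SeparatesOn Γ (f ⁻¹' W) {c}ᶜ := by
  intro u hu v hv huv huW hvW
  obtain ⟨w', hw', hsep⟩ := hW (f u) trivial (f v) trivial (f.injective.ne huv) huW hvW
  by_cases hw'f : w' ∈ Set.range f
  · obtain ⟨w, rfl⟩ := hw'f
    exact ⟨w, hw', by simpa only [f.map_adj_iff] using hsep⟩
  · refine absurd ?_ hsep
    rw [adj_comm, hf.adj_iff hw'f, adj_comm, hf.adj_iff hw'f, f.injective.eq_iff,
      f.injective.eq_iff]
    exact iff_of_false hu hv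

/-- The pendant vertices are pairwise twins, so at most one of them is missing from `W`. -/
lemma ncard_preimage_add_ncard_compl_range_le [Finite V'] (hf : IsPendantExtension f c)
    {W : Set V'} (hW : SeparatesOn Γ' W Set.univ) :
    (f ⁻¹' W).ncard + (Set.range f)ᶜ.ncard ≤ W.ncard + 1 := by
  have hmissing : ((Set.range f)ᶜ \ W).Subsingleton := by
    rintro p ⟨hp, hpW⟩ q ⟨hq, hqW⟩
    by_contra hpq
    have htwins : AreTwins Γ' p q := .inl ((hf p hp).trans (hf q hq).symm)
    exact (hW.mem_or_mem_of_areTwins htwins hpq).elim hpW hqW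
  have hsplit : (Set.range f)ᶜ ⊆ (W \ Set.range f) ∪ ((Set.range f)ᶜ \ W) :=
    fun p hp => (em (p ∈ W)).imp (fun hpW => ⟨hpW, hp⟩) (fun hpW => ⟨hp, hpW⟩)
  have := (Set.ncard_le_ncard hsplit).trans (Set.ncard_union_le _ _)
  have := (Set.ncard_le_one hmissing.finite).2 hmissing
  have := Set.ncard_eq_ncard_preimage_add_ncard_sdiff_range f.injective W
  omega

lemma separatesOn_range (hf : IsPendantExtension f c) {S : Set V} {W : Set V'}
    (hS : SeparatesOn Γ S {c}ᶜ) (hSW : f '' S ⊆ W) {p : V'} (hp : p ∉ Set.range f)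
    (hpW : p ∈ W) : SeparatesOn Γ' W (Set.range f) := by
  have hc_sep : ∀ v, v ≠ c → ∃ w ∈ W, ¬(Γ'.Adj (f c) w ↔ Γ'.Adj (f v) w) := fun v hv =>
    ⟨p, hpW, by
      rw [adj_comm, hf.adj_iff hp, adj_comm, hf.adj_iff hp]
      exact fun h => hv (f.injective (h.1 rfl))⟩
  rintro _ ⟨u, rfl⟩ _ ⟨v, rfl⟩ huv hu hv
  by_cases huc : u = c
  · subst huc
    exact hc_sep v fun h => huv (h ▸ rfl)
  by_cases hvc : v = c
  · subst hvc
    obtain ⟨w, hw, h⟩ := hc_sep u huc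
    exact ⟨w, hw, fun h' => h h'.symm⟩
  obtain ⟨w, hw, h⟩ := hS u huc v hvc (fun h => huv (h ▸ rfl))
    (fun h => hu (hSW ⟨u, h, rfl⟩)) (fun h => hv (hSW ⟨v, h, rfl⟩))
  exact ⟨f w, hSW ⟨w, hw, rfl⟩, by simpa only [f.map_adj_iff] using h⟩

lemma separatesOn_image_union (hf : IsPendantExtension f c) {S : Set V}
    (hS : SeparatesOn Γ S {c}ᶜ) (hD : DominatesOn Γ (S \ {c}) {c}ᶜ) {p₀ p₁ : V'}
    (hp₀ : p₀ ∉ Set.range f) (hp₁ : p₁ ∉ Set.range f) (hp : p₀ ≠ p₁) :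
    SeparatesOn Γ' (f '' S ∪ ((Set.range f)ᶜ \ {p₀})) Set.univ := by
  set W := f '' S ∪ ((Set.range f)ᶜ \ {p₀})
  have hp₁W : p₁ ∈ W := .inr ⟨hp₁, hp.symm⟩
  have hp₀_sep : ∀ z, f z ∉ W → ∃ w ∈ W, ¬(Γ'.Adj p₀ w ↔ Γ'.Adj (f z) w) := by
    intro z hz
    by_cases hzc : z = c
    · subst hzc
      refine ⟨p₁, hp₁W, fun h => ?_⟩
      have := (hf.adj_iff hp₀).1 (h.2 ((hf.adj_iff hp₁).2 rfl).symm)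
      exact hp₁ (this ▸ Set.mem_range_self z)
    · obtain ⟨w, ⟨hwS, hwc⟩, hzw⟩ := hD z hzc (fun h => hz (.inl ⟨z, h.1, rfl⟩))
      refine ⟨f w, .inl ⟨w, hwS, rfl⟩, fun h => hwc (f.injective ?_)⟩
      exact (hf.adj_iff hp₀).1 (h.2 (f.map_adj_iff.2 hzw))
  have hout : ∀ x ∉ W, x = p₀ ∨ x ∈ Set.range f := fun x hx =>
    or_iff_not_imp_right.2 fun hxf => by_contra fun hxp => hx (.inr ⟨hxf, hxp⟩)
  have hrange := hf.separatesOn_range hS Set.subset_union_left hp₁ hp₁W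
  intro x _ y _ hxy hx hy
  rcases hout x hx with rfl | hxf <;> rcases hout y hy with rfl | hyf
  · exact absurd rfl hxy
  · obtain ⟨v, rfl⟩ := hyf
    exact hp₀_sep v hy
  · obtain ⟨u, rfl⟩ := hxf
    obtain ⟨w, hw, h⟩ := hp₀_sep u hx
    exact ⟨w, hw, fun h' => h h'.symm⟩
  · exact hrange x hxf y hyf hxy hx hy

theorem metricDim_add_two [Finite V'] (hf : IsPendantExtension f c) {a b : V}
    (ha : IsUniversalVertex Γ a) (hb : IsUniversalVertex Γ b) (hc : IsUniversalVertex Γ c)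
    (hab : a ≠ b) (hac : a ≠ c) (hbc : b ≠ c) (hpendants : 2 ≤ (Set.range f)ᶜ.ncard) :
    metricDim Γ' + 2 = metricDim Γ + (Set.range f)ᶜ.ncard := by
  have : Finite V := Finite.of_injective f f.injective
  have hfc := hf.isUniversalVertex hc
  have upper : metricDim Γ' + 2 ≤ metricDim Γ + (Set.range f)ᶜ.ncard := by
    obtain ⟨S', hS', hS'card⟩ := hc.exists_separatesOn_ncard_eq_metricDim
    obtain ⟨S, hS, hD, hScard⟩ :=
      exists_separatesOn_compl_of_separatesOn_univ ha hb hc hab hac hbc hS'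
    obtain ⟨p₀, p₁, hp₀, hp₁, hp⟩ := (Set.one_lt_ncard_iff).1 hpendants
    have := hfc.metricDim_le (hf.separatesOn_image_union hS hD hp₀ hp₁ hp)
    have := Set.ncard_image_union_compl_range_sdiff_singleton f.injective S hp₀
    omega
  have lower : metricDim Γ + (Set.range f)ᶜ.ncard ≤ metricDim Γ' + 2 := by
    obtain ⟨W, hW, hWcard⟩ := hfc.exists_separatesOn_ncard_eq_metricDim
    obtain ⟨S', hS', hS'card⟩ := hc.exists_separatesOn_univ (hf.separatesOn_preimage hW)
    have := hc.metricDim_le hS'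
    have := hf.ncard_preimage_add_ncard_compl_range_le hW
    omega
  omega

end IsPendantExtension

end PendantExtension

section PowerGraph

variable {G H : Type*} [Group G] [Group H]

lemma powerGraph_adj_iff {x y : G} : (powerGraph G).Adj x y ↔
    x ≠ y ∧ ((∃ m : ℕ, 0 < m ∧ y = x ^ m) ∨ ∃ m : ℕ, 0 < m ∧ x = y ^ m) := by
  simp only [powerGraph, fromRel_adj]

lemma isUniversalVertex_powerGraph_one [Finite G] : IsUniversalVertex (powerGraph G) 1 :=
  fun x hx => powerGraph_adj_iff.2
    ⟨hx, .inl ⟨orderOf x, orderOf_pos x, (pow_orderOf_eq_one x).symm⟩⟩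

lemma isUniversalVertex_powerGraph_of_forall_mem_zpowers [Finite G] {g : G}
    (hg : ∀ x, x ∈ Subgroup.zpowers g) : IsUniversalVertex (powerGraph G) g := by
  intro x hx
  obtain ⟨k, rfl⟩ := mem_powers_iff_mem_zpowers.2 (hg x)
  refine powerGraph_adj_iff.2 ⟨hx, .inr ⟨k + orderOf g, by have := orderOf_pos g; omega, ?_⟩⟩
  rw [pow_add, pow_orderOf_eq_one, mul_one]

def powerGraphEmbedding (φ : G →* H) (hφ : Function.Injective φ) :
    powerGraph G ↪g powerGraph H where
  toFun := φ
  inj' := hφ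
  map_rel_iff' := by
    intro x y
    simp only [Function.Embedding.coeFn_mk, powerGraph_adj_iff, ← map_pow, hφ.ne_iff, hφ.eq_iff]

@[simp]
lemma coe_powerGraphEmbedding (φ : G →* H) (hφ : Function.Injective φ) :
    ⇑(powerGraphEmbedding φ hφ) = φ :=
  rfl

end PowerGraph

lemma ZMod.mem_zpowers_ofAdd_one {n : ℕ} (x : Multiplicative (ZMod n)) :
    x ∈ Subgroup.zpowers (Multiplicative.ofAdd 1) := by
  refine Subgroup.mem_zpowers_iff.2 ⟨(x.toAdd.cast : ℤ), ?_⟩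
  rw [← ofAdd_zsmul, zsmul_one, ZMod.intCast_zmod_cast]
  rfl

namespace DihedralGroup

variable {n : ℕ}

def rHom : Multiplicative (ZMod n) →* DihedralGroup n where
  toFun z := r z.toAdd
  map_one' := rfl
  map_mul' _ _ := (r_mul_r _ _).symm

lemma rHom_injective : Function.Injective (rHom (n := n)) :=
  fun _ _ h => r.inj h

lemma compl_range_rHom : (Set.range (rHom (n := n)))ᶜ = Set.range sr := by
  ext x
  cases x with
  | r i => simpa using ⟨Multiplicative.ofAdd i, rfl⟩
  | sr i => simp [rHom]

lemma sr_pow_eq_one_or_eq_sr (i : ZMod n) (m : ℕ) : sr i ^ m = 1 ∨ sr i ^ m = sr i := by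
  rw [← pow_mod_orderOf, orderOf_sr]
  rcases Nat.mod_two_eq_zero_or_one m with h | h <;> rw [h] <;> simp

lemma sr_ne_one (i : ZMod n) : sr i ≠ 1 := by
  rw [one_def]
  exact fun h => by cases h

lemma powerGraph_adj_sr_iff {i : ZMod n} {x : DihedralGroup n} :
    (powerGraph (DihedralGroup n)).Adj (sr i) x ↔ x = 1 := by
  refine ⟨fun h => ?_, ?_⟩
  · obtain ⟨hne, ⟨m, -, rfl⟩ | ⟨m, -, hm⟩⟩ := powerGraph_adj_iff.1 h
    · exact (sr_pow_eq_one_or_eq_sr i m).resolve_right hne.symm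
    · cases x with
      | r j => simp [r_pow] at hm
      | sr j =>
        rcases sr_pow_eq_one_or_eq_sr j m with h1 | h1 <;> rw [h1] at hm
        exacts [absurd hm (sr_ne_one i), absurd hm hne]
  · rintro rfl
    exact powerGraph_adj_iff.2 ⟨sr_ne_one i, .inl ⟨2, two_pos, by rw [pow_two, sr_mul_self]⟩⟩

lemma isPendantExtension_powerGraphEmbedding_rHom :
    IsPendantExtension (powerGraphEmbedding (rHom (n := n)) rHom_injective) 1 := by
  intro p hp
  rw [coe_powerGraphEmbedding, ← Set.mem_compl_iff, compl_range_rHom] at hp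
  obtain ⟨i, rfl⟩ := hp
  ext x
  simp [powerGraph_adj_sr_iff]

end DihedralGroup

/-- `β(P_{D_{2n}}) = β(P_{Z_n}) + n - 2` for `n ≥ 3`. -/
theorem metricDim_powerGraph_dihedral (n : ℕ) (hn : 3 ≤ n) :
    metricDim (powerGraph (DihedralGroup n)) =
      metricDim (powerGraph (Multiplicative (ZMod n))) + n - 2 := by
  have : NeZero n := ⟨by omega⟩
  have : Fact (1 < n) := ⟨by omega⟩
  have : Fact (2 < n) := ⟨hn⟩
  have ha : IsUniversalVertex (powerGraph (Multiplicative (ZMod n))) (.ofAdd 1) :=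
    isUniversalVertex_powerGraph_of_forall_mem_zpowers ZMod.mem_zpowers_ofAdd_one
  have hb : IsUniversalVertex (powerGraph (Multiplicative (ZMod n))) (.ofAdd (-1)) :=
    isUniversalVertex_powerGraph_of_forall_mem_zpowers fun x => by
      simpa only [ofAdd_neg, Subgroup.zpowers_inv] using ZMod.mem_zpowers_ofAdd_one x
  have hpendants : (Set.range (DihedralGroup.rHom (n := n)))ᶜ.ncard = n := by
    rw [DihedralGroup.compl_range_rHom,
      Set.ncard_range_of_injective fun _ _ => DihedralGroup.sr.inj, Nat.card_zmod]
  have key := DihedralGroup.isPendantExtension_powerGraphEmbedding_rHom.metricDim_add_two ha hb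
    isUniversalVertex_powerGraph_one (Multiplicative.ofAdd.injective.ne ZMod.neg_one_ne_one.symm)
    (by simp) (by simp) (by simp only [coe_powerGraphEmbedding, hpendants]; omega)
  simp only [coe_powerGraphEmbedding, hpendants] at key
  omega
end

section
/- Let G be a cyclic group of odd order |G| = 2k + 1 for a positive integer k. Then the resolving sets of the power graph P_G have the exchange property. -/
open SimpleGraph

section Aux

variable {G : Type*} [Group G] [Fintype G]

/-- `z` is in the closed neighborhood of `x` in the power graph. -/
def CN (x z : G) : Prop := z ∈ Subgroup.zpowers x ∨ x ∈ Subgroup.zpowers z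

lemma cn_self (x : G) : CN x x := Or.inl (Subgroup.mem_zpowers x)

lemma cn_symm {x z : G} (h : CN x z) : CN z x := h.symm

lemma pow_iff_zpowers {x y : G} :
    (∃ m : ℕ, 0 < m ∧ y = x ^ m) ↔ y ∈ Subgroup.zpowers x := by
  constructor
  · rintro ⟨m, _, rfl⟩
    exact ⟨(m : ℤ), by simp⟩
  · intro h
    rw [← mem_powers_iff_mem_zpowers] at h
    obtain ⟨n, rfl⟩ := h
    rcases Nat.eq_zero_or_pos n with rfl | hn
    · exact ⟨orderOf x, orderOf_pos x, by simp [pow_orderOf_eq_one]⟩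
    · exact ⟨n, hn, rfl⟩

lemma powerGraph_adj {x z : G} :
    (powerGraph G).Adj x z ↔ x ≠ z ∧ CN x z := by
  show (SimpleGraph.fromRel _).Adj x z ↔ _
  rw [SimpleGraph.fromRel_adj]
  unfold CN
  rw [pow_iff_zpowers, pow_iff_zpowers]

lemma adj_of_cn {x z : G} (h : CN x z) (hne : x ≠ z) : (powerGraph G).Adj x z :=
  powerGraph_adj.mpr ⟨hne, h⟩

/-- The twin relation (equal closed neighborhoods). -/
def Tw (x y : G) : Prop := ∀ z, CN x z ↔ CN y z

lemma tw_symm {x y : G} (h : Tw x y) : Tw y x := fun z => (h z).symm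

lemma tw_trans {x y w : G} (h1 : Tw x y) (h2 : Tw y w) : Tw x w :=
  fun z => (h1 z).trans (h2 z)

lemma tw_of_zpowers_eq {x y : G} (h : Subgroup.zpowers x = Subgroup.zpowers y) :
    Tw x y := by
  have hxy : ∀ z : G, x ∈ Subgroup.zpowers z ↔ y ∈ Subgroup.zpowers z := fun z => by
    rw [← Subgroup.zpowers_le, ← Subgroup.zpowers_le, h]
  intro z
  unfold CN
  rw [h, hxy z]

lemma cn_of_tw_left {x y z : G} (h : Tw x y) (hc : CN z x) : CN z y :=
  cn_symm ((h z).mp (cn_symm hc))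

/-- Every vertex of the power graph of an odd-order cyclic group has a distinct twin. -/
lemma exists_twin (hG : IsCyclic G) (k : ℕ) (hcard : Fintype.card G = 2 * k + 1)
    (hk : 1 ≤ k) (u : G) : ∃ v : G, v ≠ u ∧ Tw u v := by
  by_cases hu : u = 1
  · subst hu
    obtain ⟨g, hg⟩ := hG.exists_generator
    have hg1 : g ≠ 1 := by
      intro h
      subst h
      obtain ⟨x, hx⟩ := Fintype.exists_ne_of_one_lt_card
        (by omega : 1 < Fintype.card G) (1 : G)
      obtain ⟨n, hn⟩ := hg x
      simp at hn
      exact hx hn.symm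
    refine ⟨g, hg1, fun z => ?_⟩
    unfold CN
    constructor
    · intro _
      exact Or.inl (hg z)
    · intro _
      exact Or.inr (Subgroup.one_mem _)
  · refine ⟨u⁻¹, ?_, tw_of_zpowers_eq (Subgroup.zpowers_inv (g := u)).symm⟩
    intro h
    have h2 : u ^ 2 = 1 := by
      rw [pow_two]
      nth_rewrite 2 [← h]
      exact mul_inv_cancel u
    have hdvd2 : orderOf u ∣ 2 := orderOf_dvd_of_pow_eq_one h2
    have hdvdc : orderOf u ∣ 2 * k + 1 := hcard ▸ orderOf_dvd_card
    rcases (Nat.dvd_prime Nat.prime_two).mp hdvd2 with h1 | h1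
    · exact hu (orderOf_eq_one_iff.mp h1)
    · rw [h1] at hdvdc
      omega

lemma powerGraph_connected (hcard1 : 1 < Fintype.card G) :
    (powerGraph G).Connected := by
  rw [SimpleGraph.connected_iff]
  refine ⟨fun u v => ?_, ⟨1⟩⟩
  have key : ∀ w : G, (powerGraph G).Reachable w 1 := by
    intro w
    by_cases hw : w = 1
    · exact hw ▸ SimpleGraph.Reachable.refl _
    · exact (adj_of_cn (Or.inl (Subgroup.one_mem _)) hw).reachable
  exact (key u).trans (key v).symm

section WithConn

variable (hconn : (powerGraph G).Connected)

lemma dist_le_one_of_cn {u z : G} (h : CN u z) : (powerGraph G).dist u z ≤ 1 := by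
  by_cases hne : u = z
  · subst hne
    rw [SimpleGraph.dist_self]
    omega
  · exact le_of_eq (SimpleGraph.dist_eq_one_iff_adj.mpr (adj_of_cn h hne))

include hconn in
lemma dist_ge_two_of_not_cn {v z : G} (h : ¬ CN v z) : 2 ≤ (powerGraph G).dist v z := by
  have hne : v ≠ z := fun he => h (he ▸ cn_self v)
  have h0 : (powerGraph G).dist v z ≠ 0 := fun he =>
    hne (hconn.dist_eq_zero_iff.mp he)
  have h1 : (powerGraph G).dist v z ≠ 1 := fun he =>
    h (powerGraph_adj.mp (SimpleGraph.dist_eq_one_iff_adj.mp he)).2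
  omega

include hconn in
lemma dist_ne_of_cn_not_cn {u v z : G} (h1 : CN u z) (h2 : ¬ CN v z) :
    (powerGraph G).dist u z ≠ (powerGraph G).dist v z := by
  have := dist_le_one_of_cn h1
  have := dist_ge_two_of_not_cn hconn h2
  omega

include hconn in
lemma twin_dist_le {u v x : G} (h : Tw u v) (hxv : x ≠ v) :
    (powerGraph G).dist u x ≤ (powerGraph G).dist v x := by
  obtain ⟨p, hp⟩ := hconn.exists_walk_length_eq_dist v x
  cases p with
  | nil => exact absurd rfl hxv.symm
  | @cons _ b _ hadj q =>
    have hcnv : CN v b := (powerGraph_adj.mp hadj).2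
    have hcnu : CN u b := (h b).mpr hcnv
    rw [SimpleGraph.Walk.length_cons] at hp
    by_cases hub : u = b
    · calc (powerGraph G).dist u x ≤ q.length := hub ▸ SimpleGraph.dist_le q
        _ ≤ q.length + 1 := Nat.le_succ _
        _ = (powerGraph G).dist v x := hp
    · calc (powerGraph G).dist u x
          ≤ (SimpleGraph.Walk.cons (adj_of_cn hcnu hub) q).length := SimpleGraph.dist_le _
        _ = q.length + 1 := SimpleGraph.Walk.length_cons _ _
        _ = (powerGraph G).dist v x := hp

include hconn in
lemma twin_dist {u v x : G} (h : Tw u v) (hxu : x ≠ u) (hxv : x ≠ v) :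
    (powerGraph G).dist u x = (powerGraph G).dist v x :=
  le_antisymm (twin_dist_le hconn h hxv) (twin_dist_le hconn (tw_symm h) hxu)

/-- `W` hits every twin pair. -/
def HitsTwins (W : Set G) : Prop := ∀ u v : G, Tw u v → u ≠ v → u ∈ W ∨ v ∈ W

variable (htwin : ∀ u : G, ∃ v : G, v ≠ u ∧ Tw u v)

include hconn htwin in
lemma helper_resolve {W : Set G} (hP : HitsTwins W) {u v z : G} (huv : u ≠ v)
    (hz1 : CN u z) (hz2 : ¬ CN v z) :
    ∃ w ∈ W, (powerGraph G).dist u w ≠ (powerGraph G).dist v w := by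
  obtain ⟨z', hz'ne, hz'tw⟩ := htwin z
  rcases hP z z' hz'tw (Ne.symm hz'ne) with hzW | hz'W
  · exact ⟨z, hzW, dist_ne_of_cn_not_cn hconn hz1 hz2⟩
  · by_cases hz'u : z' = u
    · refine ⟨u, hz'u ▸ hz'W, ?_⟩
      rw [SimpleGraph.dist_self]
      intro h
      exact huv (hconn.dist_eq_zero_iff.mp h.symm).symm
    · by_cases hz'v : z' = v
      · exfalso
        apply hz2
        have hcz : CN z' z := (hz'tw z).mp (cn_self z)
        rwa [hz'v] at hcz
      · have hvz : v ≠ z := fun he => hz2 (he ▸ cn_self v)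
        have hcnuz' : CN u z' := cn_symm ((hz'tw u).mp (cn_symm hz1))
        have hd1 : (powerGraph G).dist u z' ≤ 1 := dist_le_one_of_cn hcnuz'
        have hd2 : (powerGraph G).dist v z' = (powerGraph G).dist v z := by
          rw [SimpleGraph.dist_comm, SimpleGraph.dist_comm (u := v) (v := z)]
          exact (twin_dist hconn hz'tw hvz (Ne.symm hz'v)).symm
        refine ⟨z', hz'W, ?_⟩
        have := dist_ge_two_of_not_cn hconn hz2
        omega

include hconn htwin in
lemma resolving_iff (W : Set G) :
    IsResolvingSet (powerGraph G) W ↔ HitsTwins W := by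
  constructor
  · intro hres a b htab hne
    by_contra hcon
    push_neg at hcon
    obtain ⟨w, hwW, hdw⟩ := hres a b hne
    have hwa : w ≠ a := fun he => hcon.1 (he ▸ hwW)
    have hwb : w ≠ b := fun he => hcon.2 (he ▸ hwW)
    exact hdw (twin_dist hconn htab hwa hwb)
  · intro hP a b hne
    by_cases htw : Tw a b
    · rcases hP a b htw hne with ha | hb
      · refine ⟨a, ha, ?_⟩
        rw [SimpleGraph.dist_self]
        intro h
        exact hne (hconn.dist_eq_zero_iff.mp h.symm).symm
      · refine ⟨b, hb, ?_⟩
        rw [SimpleGraph.dist_self]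
        intro h
        exact hne (hconn.dist_eq_zero_iff.mp h)
    · unfold Tw at htw
      push_neg at htw
      obtain ⟨z, hz⟩ := htw
      rcases hz with ⟨hca, hcb⟩ | ⟨hca, hcb⟩
      · exact helper_resolve hconn htwin hP hne hca hcb
      · obtain ⟨w, hwW, hd⟩ := helper_resolve hconn htwin hP (Ne.symm hne) hcb hca
        exact ⟨w, hwW, hd.symm⟩


include hconn htwin in
lemma minResolvingIff (W : Set G) :
    IsMinimalResolvingSet (powerGraph G) W ↔
      HitsTwins W ∧ ∀ u ∈ W, ∃ y, Tw u y ∧ y ≠ u ∧ y ∉ W := by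
  constructor
  · rintro ⟨hres, hmin⟩
    refine ⟨(resolving_iff hconn htwin W).mp hres, fun u hu => ?_⟩
    have hss : W \ {u} ⊂ W := Set.sdiff_singleton_ssubset.mpr hu
    have hnot : ¬ HitsTwins (W \ {u}) := fun h =>
      hmin (W \ {u}) hss ((resolving_iff hconn htwin _).mpr h)
    unfold HitsTwins at hnot
    push_neg at hnot
    obtain ⟨a, b, htab, hab, haW, hbW⟩ := hnot
    rcases (resolving_iff hconn htwin W).mp hres a b htab hab with ha | hb
    · have hau : a = u := by
        by_contra h
        exact haW ⟨ha, h⟩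
      refine ⟨b, hau ▸ htab, ?_, ?_⟩
      · rw [← hau]; exact Ne.symm hab
      · intro hbW'
        exact hbW ⟨hbW', by rw [Set.mem_singleton_iff, ← hau]; exact Ne.symm hab⟩
    · have hbu : b = u := by
        by_contra h
        exact hbW ⟨hb, h⟩
      refine ⟨a, tw_symm (hbu ▸ htab), ?_, ?_⟩
      · rw [← hbu]; exact hab
      · intro haW'
        exact haW ⟨haW', by rw [Set.mem_singleton_iff, ← hbu]; exact hab⟩
  · rintro ⟨hP, hbreak⟩
    refine ⟨(resolving_iff hconn htwin W).mpr hP, fun W' hss hres' => ?_⟩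
    obtain ⟨u, huW, huW'⟩ := Set.exists_of_ssubset hss
    obtain ⟨y, hty, hyne, hyW⟩ := hbreak u huW
    rcases (resolving_iff hconn htwin W').mp hres' u y hty (Ne.symm hyne) with h | h
    · exact huW' h
    · exact hyW (hss.subset h)

end WithConn

end Aux

/-- The power graph of a cyclic group of odd order `2k + 1`,
`k ≥ 1`, has the exchange property. -/
theorem exchange_powerGraph_cyclic_odd
    (G : Type*) [Group G] [Fintype G] (hG : IsCyclic G)
    (k : ℕ) (hk : 1 ≤ k) (hcard : Fintype.card G = 2 * k + 1) :
    HasExchangeProperty (powerGraph G) := by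
  have hconn : (powerGraph G).Connected := powerGraph_connected (by omega)
  have htwin : ∀ u : G, ∃ v : G, v ≠ u ∧ Tw u v := exists_twin hG k hcard hk
  intro W₁ W₂ h1 h2 u hu
  rw [minResolvingIff hconn htwin] at h1 h2
  obtain ⟨hP1, hb1⟩ := h1
  obtain ⟨hP2, hb2⟩ := h2
  obtain ⟨y, hty, hyne, hyW1⟩ := hb1 u hu
  by_cases huW2 : u ∈ W₂
  · refine ⟨u, huW2, ?_⟩
    rw [Set.diff_union_self, Set.union_singleton, Set.insert_eq_self.mpr hu]
    rw [minResolvingIff hconn htwin]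
    exact ⟨hP1, hb1⟩
  · have hyW2 : y ∈ W₂ := by
      rcases hP2 u y hty (Ne.symm hyne) with h | h
      · exact absurd h huW2
      · exact h
    refine ⟨y, hyW2, ?_⟩
    rw [minResolvingIff hconn htwin]
    set W₃ : Set G := (W₁ \ {u}) ∪ {y} with hW₃
    have huW3 : u ∉ W₃ := by
      intro h
      rcases h with h | h
      · exact h.2 rfl
      · exact hyne (Set.mem_singleton_iff.mp h).symm
    have key : ∀ a b : G, Tw a b → a ≠ b → a ∈ W₁ → a ∈ W₃ ∨ b ∈ W₃ := by
      intro a b htab hab haW1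
      by_cases hau : a = u
      · subst hau
        by_cases hby : b = y
        · exact Or.inr (Or.inr (hby ▸ rfl))
        · have htby : Tw b y := tw_trans (tw_symm htab) hty
          rcases hP1 b y htby hby with hbW1 | hyW1'
          · exact Or.inr (Or.inl ⟨hbW1, Ne.symm hab⟩)
          · exact absurd hyW1' hyW1
      · exact Or.inl (Or.inl ⟨haW1, hau⟩)
    constructor
    · intro a b htab hab
      rcases hP1 a b htab hab with ha | hb
      · exact key a b htab hab ha
      · rcases key b a (tw_symm htab) (Ne.symm hab) hb with h | h
        · exact Or.inr h
        · exact Or.inl h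
    · intro w hw
      rcases hw with hw | hw
      · obtain ⟨hwW1, hwu⟩ := hw
        rw [Set.mem_singleton_iff] at hwu
        obtain ⟨t, htw, htne, htW1⟩ := hb1 w hwW1
        by_cases hty' : t = y
        · refine ⟨u, tw_trans (hty' ▸ htw) (tw_symm hty), Ne.symm hwu, huW3⟩
        · refine ⟨t, htw, htne, ?_⟩
          intro h
          rcases h with h | h
          · exact htW1 h.1
          · exact hty' (Set.mem_singleton_iff.mp h)
      · rw [Set.mem_singleton_iff] at hw
        subst hw
        exact ⟨u, tw_symm hty, Ne.symm hyne, huW3⟩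
end

section
/- Let G be a finite group and let x ∈ G be a singleton twin of the power graph P_G. Then x is an involution or x is the identity element of G. -/
open SimpleGraph

private lemma pos_pow_iff_mem_zpowers {G : Type*} [Group G] [Fintype G] (a b : G) :
    (∃ m : ℕ, 0 < m ∧ b = a ^ m) ↔ b ∈ Subgroup.zpowers a := by
  constructor
  · rintro ⟨m, -, rfl⟩
    exact ⟨(m : ℤ), by simp⟩
  · intro hb
    have : b ∈ Submonoid.powers a := mem_powers_iff_mem_zpowers.mpr hb
    obtain ⟨m, rfl⟩ := this
    refine ⟨m + orderOf a, Nat.add_pos_right m (orderOf_pos a), ?_⟩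
    rw [pow_add, pow_orderOf_eq_one, mul_one]

private lemma closed_nbhd_eq {G : Type*} [Group G] [Fintype G] (x : G) :
    insert x ((powerGraph G).neighborSet x)
      = {z | z ∈ Subgroup.zpowers x ∨ x ∈ Subgroup.zpowers z} := by
  ext z
  simp only [Set.mem_insert_iff, mem_neighborSet, powerGraph, fromRel_adj,
    Set.mem_setOf_eq, pos_pow_iff_mem_zpowers]
  constructor
  · rintro (rfl | ⟨-, h | h⟩)
    · exact Or.inl ⟨1, by simp⟩
    · exact Or.inl h
    · exact Or.inr h
  · intro h
    by_cases hzx : z = x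
    · exact Or.inl hzx
    · exact Or.inr ⟨fun e => hzx e.symm, h⟩

/-- A singleton twin of the power graph of a finite group is an
involution or the identity. -/
theorem singleton_twin_involution_or_identity
    (G : Type*) [Group G] [Fintype G] (x : G)
    (hx : twinClass (powerGraph G) x = {x}) :
    orderOf x = 2 ∨ x = 1 := by
  have htw : AreTwins (powerGraph G) x x⁻¹ := by
    right
    rw [closed_nbhd_eq, closed_nbhd_eq]
    ext z
    simp only [Set.mem_setOf_eq, Subgroup.zpowers_inv, inv_mem_iff]
  have : x⁻¹ ∈ twinClass (powerGraph G) x := htw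
  rw [hx, Set.mem_singleton_iff] at this
  have hx2 : x ^ 2 = 1 := by
    rw [pow_two]
    calc x * x = x⁻¹ * x := by rw [this]
    _ = 1 := inv_mul_cancel x
  have hd : orderOf x ∣ 2 := orderOf_dvd_of_pow_eq_one hx2
  rcases (Nat.Prime.eq_one_or_self_of_dvd Nat.prime_two _ hd) with h | h
  · exact Or.inr (orderOf_eq_one_iff.mp h)
  · exact Or.inl h
end

section
/- Let G be a finite group belonging to the class Ψ. Then the metric dimension of the power graph P_G is β(P_G) = |G| − |U(P_G)| + 1, where |U(P_G)| is the number of twin classes of P_G. -/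
open SimpleGraph

/-- The class `Ψ`: noncyclic groups with an odd prime `p` such that (C1) the
prime divisors of `|G|` are exactly `2` and `p`; (C2) the subgroup of order `p`
is unique; (C3) there is no element of order `4`; (C4) each involution lies in
a cyclic subgroup of order `2p`. -/
def InPsi (G : Type*) [Group G] [Fintype G] : Prop :=
  ¬ IsCyclic G ∧
    ∃ p : ℕ, p.Prime ∧ Odd p ∧
      (∀ q : ℕ, q.Prime → (q ∣ Fintype.card G ↔ q = 2 ∨ q = p)) ∧
      (∃! H : Subgroup G, Nat.card H = p) ∧
      (∀ x : G, orderOf x ≠ 4) ∧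
      (∀ x : G, orderOf x = 2 →
        ∃ H : Subgroup G, IsCyclic H ∧ Nat.card H = 2 * p ∧ x ∈ H)

/-!
The identity of `G` is adjacent to every vertex of `P_G`, so distances in `P_G` are `0`, `1` or
`2` and a vertex `w` separates `u ≠ v` (both `≠ w`) exactly when it is adjacent to one of them
only; twins are separated by nothing else, so the complement of a resolving set `W` meets each
twin class at most once and `|W| ≥ |G| - |U(P_G)|`.

Let `P = ⟨z⟩` be the subgroup of order `p`. The identity and every involution are twin to
nothing else, and twins of `z` have order `p`. If `Wᶜ` met every twin class it would contain
`1`, all involutions and some `y` of order `p`; every other element has order divisible by `p`,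
so contains `y` among its powers and is adjacent to both `1` and `y`: then `W` does not separate
`1` from `y`. Hence `|W| ≥ |G| - |U(P_G)| + 1`.

Conversely, pick one vertex in each twin class other than that of `z`. Two of them are separated
by some `w` of order at least `3`: an involution `t` separating them can be traded for an element
of order `2p` whose powers contain `t`. As `w⁻¹` is a twin of `w` distinct from it, one of them
is not picked, so the complement of the picked set resolves and has `|G| - |U(P_G)| + 1` elements.
-/

section Graph

variable {V : Type*} {Γ : SimpleGraph V} {u v w : V}

theorem areTwins_iff_forall_adj :
    AreTwins Γ u v ↔ ∀ w, w ≠ u → w ≠ v → (Γ.Adj u w ↔ Γ.Adj v w) := by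
  constructor
  · rintro (h | h) w hwu hwv
    · exact Set.ext_iff.mp h w
    · simpa [hwu, hwv] using Set.ext_iff.mp h w
  · intro h
    by_cases huv : Γ.Adj u v
    · refine Or.inr (Set.ext fun w => ?_)
      by_cases hwu : w = u
      · simp [hwu, huv.symm]
      by_cases hwv : w = v
      · simp [hwv, huv]
      simpa [hwu, hwv] using h w hwu hwv
    · refine Or.inl (Set.ext fun w => ?_)
      by_cases hwu : w = u
      · simp [hwu, Γ.adj_comm v u, huv]
      by_cases hwv : w = v
      · simp [hwv, huv]
      exact h w hwu hwv

theorem areTwins_equivalence : Equivalence (AreTwins Γ) where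
  refl _ := Or.inl rfl
  symm h := h.imp Eq.symm Eq.symm
  trans {u v s} huv hvs := by
    rw [areTwins_iff_forall_adj] at huv hvs ⊢
    intro w hwu hws
    by_cases hwv : w = v
    · subst hwv
      by_cases hus : u = s
      · rw [hus]
      rw [Γ.adj_comm u, Γ.adj_comm s, hvs u hwu.symm hus, Γ.adj_comm s,
        huv s (Ne.symm hus) hws.symm]
    · exact (huv w hwu hwv).trans (hvs w hwv hws)

theorem twinClass_eq_twinClass_iff : twinClass Γ u = twinClass Γ v ↔ AreTwins Γ u v := by
  constructor
  · intro h
    have hv : v ∈ twinClass Γ u := h ▸ areTwins_equivalence.refl v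
    exact hv
  · intro h
    ext w
    exact ⟨areTwins_equivalence.trans (areTwins_equivalence.symm h),
      areTwins_equivalence.trans h⟩

theorem not_areTwins_of_adj_of_not_adj (hwu : w ≠ u) (hwv : w ≠ v) (hu : Γ.Adj u w)
    (hv : ¬ Γ.Adj v w) : ¬ AreTwins Γ u v :=
  fun h => hv ((areTwins_iff_forall_adj.mp h w hwu hwv).mp hu)

theorem twinClassCount_eq_ncard_range : twinClassCount Γ = (Set.range (twinClass Γ)).ncard := by
  simp only [twinClassCount, Set.range, eq_comm]

theorem exists_injOn_twinClass_ncard_eq :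
    ∃ T : Set V, Set.InjOn (twinClass Γ) T ∧ T.ncard = twinClassCount Γ := by
  obtain ⟨T, -, hT⟩ := Set.exists_subset_bijOn Set.univ (twinClass Γ)
  refine ⟨T, hT.injOn, ?_⟩
  rw [twinClassCount_eq_ncard_range, ← Set.image_univ, ← hT.image_eq, hT.injOn.ncard_image]

section Finite

variable [Finite V] {T : Set V}

theorem Set.InjOn.ncard_le_twinClassCount (hT : Set.InjOn (twinClass Γ) T) :
    T.ncard ≤ twinClassCount Γ := by
  rw [twinClassCount_eq_ncard_range, ← hT.ncard_image]
  exact Set.ncard_le_ncard (Set.image_subset_range _ _)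

theorem Set.InjOn.exists_areTwins_of_ncard_eq (hT : Set.InjOn (twinClass Γ) T)
    (hcard : T.ncard = twinClassCount Γ) (u : V) : ∃ t ∈ T, AreTwins Γ u t := by
  have himage : twinClass Γ '' T = Set.range (twinClass Γ) :=
    Set.eq_of_subset_of_ncard_le (Set.image_subset_range _ _)
      (by rw [hT.ncard_image, hcard, twinClassCount_eq_ncard_range])
  obtain ⟨t, htT, ht⟩ := himage.symm.subset (Set.mem_range_self u)
  exact ⟨t, htT, twinClass_eq_twinClass_iff.mp ht.symm⟩

end Finite

theorem twinClassCount_le_card [Fintype V] : twinClassCount Γ ≤ Fintype.card V := by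
  obtain ⟨T, -, hT⟩ := exists_injOn_twinClass_ncard_eq (Γ := Γ)
  rw [← hT, ← Nat.card_eq_fintype_card]
  exact T.ncard_le_card

section Dominating

variable {c : V} (hc : ∀ v, v ≠ c → Γ.Adj c v)
include hc

theorem SimpleGraph.reachable_of_forall_adj (u v : V) : Γ.Reachable u v := by
  have hreach : ∀ x, Γ.Reachable c x := fun x => by
    by_cases hx : x = c
    · subst hx; rfl
    · exact (hc x hx).reachable
  exact (hreach u).symm.trans (hreach v)

theorem SimpleGraph.dist_eq_two_of_forall_adj (huv : u ≠ v) (h : ¬ Γ.Adj u v) :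
    Γ.dist u v = 2 := by
  have huc : u ≠ c := fun e => h (e ▸ hc v (e ▸ huv).symm)
  have hvc : v ≠ c := fun e => h (e ▸ (hc u (e ▸ huv)).symm)
  have hle : Γ.dist u v ≤ 2 := dist_le (Walk.cons (hc u huc).symm (Walk.cons (hc v hvc) .nil))
  have h0 : Γ.dist u v ≠ 0 := fun e =>
    huv ((reachable_of_forall_adj hc u v).dist_eq_zero_iff.mp e)
  have h1 : Γ.dist u v ≠ 1 := fun e => h (dist_eq_one_iff_adj.mp e)
  omega

theorem SimpleGraph.dist_eq_dist_iff_of_forall_adj (hwu : w ≠ u) (hwv : w ≠ v) :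
    Γ.dist u w = Γ.dist v w ↔ (Γ.Adj u w ↔ Γ.Adj v w) := by
  have one : ∀ x, Γ.Adj x w → Γ.dist x w = 1 := fun x h => dist_eq_one_iff_adj.mpr h
  have two : ∀ x, w ≠ x → ¬ Γ.Adj x w → Γ.dist x w = 2 :=
    fun x hwx h => dist_eq_two_of_forall_adj hc hwx.symm h
  by_cases hu : Γ.Adj u w <;> by_cases hv : Γ.Adj v w <;> simp [hu, hv, one, two, hwu, hwv]

theorem IsResolvingSet.injOn_twinClass_compl {W : Set V} (hW : IsResolvingSet Γ W) :
    Set.InjOn (twinClass Γ) Wᶜ := by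
  intro u hu v hv huv
  by_contra hne
  obtain ⟨w, hwW, hw⟩ := hW u v hne
  have hwu : w ≠ u := fun e => hu (e ▸ hwW)
  have hwv : w ≠ v := fun e => hv (e ▸ hwW)
  exact hw ((dist_eq_dist_iff_of_forall_adj hc hwu hwv).mpr
    (areTwins_iff_forall_adj.mp (twinClass_eq_twinClass_iff.mp huv) w hwu hwv))

theorem isResolvingSet_compl_of_injOn {T : Set V} (hT : Set.InjOn (twinClass Γ) T)
    (hsep : ∀ u ∈ T, ∀ v ∈ T, u ≠ v → ∃ w w', w' ≠ w ∧ AreTwins Γ w w' ∧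
      w ≠ u ∧ w ≠ v ∧ ¬ (Γ.Adj u w ↔ Γ.Adj v w)) :
    IsResolvingSet Γ Tᶜ := by
  have hdist : ∀ {x y}, x ≠ y → Γ.dist x y ≠ 0 := fun hxy e =>
    hxy ((reachable_of_forall_adj hc _ _).dist_eq_zero_iff.mp e)
  intro u v huv
  by_cases hu : u ∈ Tᶜ
  · exact ⟨u, hu, by rw [dist_self]; exact (hdist huv.symm).symm⟩
  by_cases hv : v ∈ Tᶜ
  · exact ⟨v, hv, by rw [dist_self]; exact hdist huv⟩
  rw [Set.notMem_compl_iff] at hu hv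
  obtain ⟨w, w', hw'w, htwin, hwu, hwv, hsep⟩ := hsep u hu v hv huv
  by_cases hw : w ∈ Tᶜ
  · exact ⟨w, hw, fun e => hsep ((dist_eq_dist_iff_of_forall_adj hc hwu hwv).mp e)⟩
  rw [Set.notMem_compl_iff] at hw
  have hw' : w' ∉ T := fun h =>
    hw'w (hT h hw (twinClass_eq_twinClass_iff.mpr (areTwins_equivalence.symm htwin)))
  have hw'u : w' ≠ u := fun e => hw' (e ▸ hu)
  have hw'v : w' ≠ v := fun e => hw' (e ▸ hv)
  have hadj : ∀ x, x ≠ w → x ≠ w' → (Γ.Adj x w ↔ Γ.Adj x w') := fun x hxw hxw' => by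
    rw [Γ.adj_comm x w, Γ.adj_comm x w']
    exact areTwins_iff_forall_adj.mp htwin x hxw hxw'
  rw [hadj u hwu.symm hw'u.symm, hadj v hwv.symm hw'v.symm] at hsep
  exact ⟨w', hw', fun e => hsep ((dist_eq_dist_iff_of_forall_adj hc hw'u hw'v).mp e)⟩

end Dominating

theorem metricDim_eq_ncard [Finite V] {W : Set V} (hW : IsResolvingSet Γ W)
    (hmin : ∀ W', IsResolvingSet Γ W' → W.ncard ≤ W'.ncard) : metricDim Γ = W.ncard :=
  le_antisymm (Nat.sInf_le ⟨W, W.toFinite, rfl, hW⟩) <|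
    le_csInf ⟨_, W, W.toFinite, rfl, hW⟩ fun _ ⟨W', _, hcard, hW'⟩ => hcard ▸ hmin W' hW'

end Graph

open Subgroup

section Group

variable {G : Type*} [Group G] {x y a b : G}

theorem eq_of_mem_zpowers_of_orderOf_eq_two [Finite G] (ha : a ∈ zpowers x) (hb : b ∈ zpowers x)
    (ha2 : orderOf a = 2) (hb2 : orderOf b = 2) : a = b := by
  classical
  have := Fintype.ofFinite G
  have h2 : 2 ∣ Fintype.card (zpowers x) := by
    rw [Fintype.card_zpowers, ← ha2]
    exact orderOf_dvd_of_mem_zpowers ha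
  obtain ⟨c, hc⟩ := Finset.card_eq_one.mp
    ((IsCyclic.card_orderOf_eq_totient h2).trans Nat.totient_two)
  have hmem : ∀ d (hd : d ∈ zpowers x), orderOf d = 2 → (⟨d, hd⟩ : zpowers x) = c :=
    fun d hd h => Finset.mem_singleton.mp <|
      hc ▸ Finset.mem_filter.mpr ⟨Finset.mem_univ _, by rwa [orderOf_mk]⟩
  exact congrArg Subtype.val ((hmem a ha ha2).trans (hmem b hb hb2).symm)

theorem eq_one_or_eq_of_mem_zpowers [Finite G] (hx : orderOf x = 2) (hy : y ∈ zpowers x) :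
    y = 1 ∨ y = x := by
  rcases (Nat.dvd_prime Nat.prime_two).mp (hx ▸ orderOf_dvd_of_mem_zpowers hy) with h | h
  · exact Or.inl (orderOf_eq_one_iff.mp h)
  · exact Or.inr (eq_of_mem_zpowers_of_orderOf_eq_two hy (mem_zpowers x) h hx)

theorem inv_ne_self_of_not_orderOf_dvd_two (h : ¬ orderOf x ∣ 2) : x⁻¹ ≠ x := fun e =>
  h (orderOf_dvd_of_pow_eq_one (by rw [pow_two]; exact inv_eq_iff_mul_eq_one.mp e))

theorem Subgroup.mem_of_sq_mem_of_pow_mem {H : Subgroup G} {m : ℕ} (hm : Odd m)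
    (h2 : x ^ 2 ∈ H) (hxm : x ^ m ∈ H) : x ∈ H := by
  obtain ⟨k, rfl⟩ := hm
  have hx : x = (x ^ 2) ^ (k + 1) * (x ^ (2 * k + 1))⁻¹ := by group
  rw [hx]
  exact mul_mem (pow_mem h2 _) (inv_mem hxm)

theorem exists_odd_orderOf_eq_or_eq_two_mul [Finite G] (hno4 : ∀ x : G, orderOf x ≠ 4) (g : G) :
    ∃ m, Odd m ∧ (orderOf g = m ∨ orderOf g = 2 * m) := by
  obtain ⟨k, m, hm, hk⟩ := Nat.exists_eq_two_pow_mul_odd (orderOf_pos g).ne'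
  refine ⟨m, hm, ?_⟩
  have hk2 : k < 2 := by
    by_contra! hk2
    have h4 : 4 ∣ orderOf g := hk ▸ Dvd.dvd.mul_right (pow_dvd_pow 2 hk2) m
    exact hno4 _ (orderOf_pow_orderOf_div (orderOf_pos g).ne' h4)
  interval_cases k <;> simp [hk]

theorem powerGraph_adj_iff_s16 [Finite G] :
    (powerGraph G).Adj x y ↔ x ≠ y ∧ (x ∈ zpowers y ∨ y ∈ zpowers x) := by
  have hpow : ∀ a b : G, (∃ m : ℕ, 0 < m ∧ b = a ^ m) ↔ b ∈ zpowers a := fun a b => by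
    rw [← mem_powers_iff_mem_zpowers]
    constructor
    · rintro ⟨m, -, rfl⟩
      exact ⟨m, rfl⟩
    · rintro ⟨m, rfl⟩
      refine ⟨m + orderOf a, by have := orderOf_pos a; omega, ?_⟩
      rw [pow_add, pow_orderOf_eq_one, mul_one]
  simp only [powerGraph, SimpleGraph.fromRel_adj, hpow, or_comm]

theorem powerGraph_adj_one [Finite G] (hx : x ≠ 1) : (powerGraph G).Adj 1 x :=
  powerGraph_adj_iff_s16.mpr ⟨hx.symm, Or.inl (one_mem _)⟩

theorem powerGraph_areTwins_of_zpowers_eq [Finite G] (h : zpowers x = zpowers y) :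
    AreTwins (powerGraph G) x y := by
  rw [areTwins_iff_forall_adj]
  intro w hwx hwy
  simp only [powerGraph_adj_iff_s16, ← zpowers_le, h, hwx.symm, hwy.symm, ne_eq, not_false_eq_true,
    true_and]

theorem powerGraph_not_adj_of_coprime [Finite G] (hx : x ≠ 1) (hy : y ≠ 1)
    (h : (orderOf x).Coprime (orderOf y)) : ¬ (powerGraph G).Adj x y := by
  rw [powerGraph_adj_iff_s16]
  rintro ⟨-, hxy | hyx⟩
  · exact hx (orderOf_eq_one_iff.mp (h.eq_one_of_dvd (orderOf_dvd_of_mem_zpowers hxy)))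
  · exact hy (orderOf_eq_one_iff.mp (h.symm.eq_one_of_dvd (orderOf_dvd_of_mem_zpowers hyx)))

theorem isCyclic_of_forall_adj [Finite G] (hno4 : ∀ g : G, orderOf g ≠ 4)
    (h2 : 2 ∣ orderOf x) (hx2 : orderOf x ≠ 2)
    (hall : ∀ g, g ≠ x → (powerGraph G).Adj x g) : IsCyclic G := by
  have hmem : ∀ g : G, ¬ orderOf x ∣ orderOf g → g ∈ zpowers x := fun g hg => by
    by_cases hgx : g = x
    · exact hgx ▸ mem_zpowers x
    · exact (powerGraph_adj_iff_s16.mp (hall g hgx)).2.resolve_left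
        fun hxg => hg (orderOf_dvd_of_mem_zpowers hxg)
  refine ⟨x, fun g => ?_⟩
  obtain ⟨m, hm, hord⟩ := exists_odd_orderOf_eq_or_eq_two_mul hno4 g
  have hg2m : orderOf g ∣ 2 * m := by rcases hord with h | h <;> simp [h]
  refine mem_of_sq_mem_of_pow_mem hm (hmem _ fun h => ?_) (hmem _ fun h => ?_)
  · have : orderOf (g ^ 2) ∣ m := orderOf_dvd_of_pow_eq_one (by
      rw [← pow_mul, orderOf_dvd_iff_pow_eq_one.mp hg2m])
    exact Nat.not_even_iff_odd.mpr hm (even_iff_two_dvd.mpr ((h2.trans h).trans this))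
  · have : orderOf (g ^ m) ∣ 2 := orderOf_dvd_of_pow_eq_one (by
      rw [← pow_mul, mul_comm, orderOf_dvd_iff_pow_eq_one.mp hg2m])
    exact hx2 (Nat.dvd_antisymm (h.trans this) h2)

end Group

/-- `G ∈ Ψ` for the prime `p`, where `zpowers z` is the unique subgroup of order `p`; condition
(C4) is recorded through a generator of the cyclic subgroup of order `2p`. -/
structure InPsiWith (G : Type*) [Group G] [Fintype G] (p : ℕ) (z : G) : Prop where
  prime : p.Prime
  ne_two : p ≠ 2
  not_isCyclic : ¬ IsCyclic G
  two_dvd_card : 2 ∣ Fintype.card G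
  eq_two_or_eq_of_dvd_card : ∀ q : ℕ, q.Prime → q ∣ Fintype.card G → q = 2 ∨ q = p
  orderOf_z : orderOf z = p
  zpowers_eq : ∀ y : G, orderOf y = p → zpowers y = zpowers z
  orderOf_ne_four : ∀ x : G, orderOf x ≠ 4
  exists_orderOf_eq_two_mul :
    ∀ t : G, orderOf t = 2 → ∃ h : G, orderOf h = 2 * p ∧ t ∈ zpowers h

theorem InPsi.exists_inPsiWith {G : Type*} [Group G] [Fintype G] (hG : InPsi G) :
    ∃ p z, InPsiWith G p z := by
  obtain ⟨hnc, p, hp, hodd, hdvd, ⟨P, hP, hPuniq⟩, hno4, hinv⟩ := hG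
  have := Fact.mk hp
  obtain ⟨z, hz⟩ := exists_prime_orderOf_dvd_card p ((hdvd p hp).mpr (Or.inr rfl))
  have hzpowers : ∀ y : G, orderOf y = p → zpowers y = P := fun y hy =>
    hPuniq _ (show Nat.card (zpowers y) = p by rw [Nat.card_zpowers, hy])
  refine ⟨p, z, hp, fun h => by have := Nat.odd_iff.mp hodd; omega, hnc,
    (hdvd 2 Nat.prime_two).mpr (Or.inl rfl), fun q hq => (hdvd q hq).mp, hz,
    fun y hy => (hzpowers y hy).trans (hzpowers z hz).symm, hno4, fun t ht => ?_⟩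
  obtain ⟨H, hH, hcard, htH⟩ := hinv t ht
  obtain ⟨⟨h, hhH⟩, hgen⟩ := hH.exists_generator
  have hord : orderOf h = 2 * p := by
    rw [← Subgroup.orderOf_mk h hhH, orderOf_eq_card_of_forall_mem_zpowers hgen, hcard]
  have hzH : zpowers h = H := Subgroup.eq_of_le_of_card_ge (zpowers_le.mpr hhH)
    (by rw [Nat.card_zpowers, hord, hcard])
  exact ⟨h, hord, hzH ▸ htH⟩

namespace InPsiWith

variable {G : Type*} [Group G] [Fintype G] {p : ℕ} {z : G} (hΨ : InPsiWith G p z)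
include hΨ

theorem not_dvd_two : ¬ p ∣ 2 := fun h =>
  hΨ.ne_two ((Nat.prime_dvd_prime_iff_eq hΨ.prime Nat.prime_two).mp h)

theorem ne_one_of_orderOf_eq {x : G} (hx : orderOf x = p) : x ≠ 1 := by
  rintro rfl
  exact hΨ.prime.one_lt.ne' (hx ▸ orderOf_one)

theorem dvd_orderOf {g : G} (h1 : g ≠ 1) (h2 : orderOf g ≠ 2) : p ∣ orderOf g := by
  by_contra hpg
  obtain ⟨m, hm, hord⟩ := exists_odd_orderOf_eq_or_eq_two_mul hΨ.orderOf_ne_four g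
  have hmg : m ∣ orderOf g := by rcases hord with h | h <;> simp [h]
  have hm1 : m = 1 := Nat.eq_one_iff_not_exists_prime_dvd.mpr fun q hq hqm => by
    rcases hΨ.eq_two_or_eq_of_dvd_card q hq ((hqm.trans hmg).trans orderOf_dvd_card) with rfl | rfl
    · exact Nat.not_even_iff_odd.mpr hm (even_iff_two_dvd.mpr hqm)
    · exact hpg (hqm.trans hmg)
  subst hm1
  rcases hord with h | h
  · exact h1 (orderOf_eq_one_iff.mp h)
  · exact h2 h

theorem mem_zpowers_of_dvd_orderOf {g y : G} (hy : orderOf y = p) (h : p ∣ orderOf g) :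
    y ∈ zpowers g := by
  have hg : orderOf (g ^ (orderOf g / p)) = p := orderOf_pow_orderOf_div (orderOf_pos g).ne' h
  rw [← zpowers_le, hΨ.zpowers_eq y hy, ← hΨ.zpowers_eq _ hg, zpowers_le]
  exact pow_mem (mem_zpowers g) _

theorem exists_orderOf_eq_two : ∃ t : G, orderOf t = 2 :=
  have := Fact.mk Nat.prime_two
  exists_prime_orderOf_dvd_card 2 hΨ.two_dvd_card

theorem not_adj_of_orderOf_eq_two {t y : G} (ht : orderOf t = 2) (hy : orderOf y = p) :
    ¬ (powerGraph G).Adj t y :=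
  powerGraph_not_adj_of_coprime (by rintro rfl; simp at ht) (hΨ.ne_one_of_orderOf_eq hy)
    (by rw [ht, hy]; exact (Nat.coprime_primes Nat.prime_two hΨ.prime).mpr hΨ.ne_two.symm)

theorem exists_not_adj {x : G} (hx : x ≠ 1) : ∃ g, g ≠ x ∧ ¬ (powerGraph G).Adj x g := by
  by_contra! hall
  obtain ⟨t, ht⟩ := hΨ.exists_orderOf_eq_two
  have hx2 : orderOf x ≠ 2 := fun hx2 =>
    hΨ.not_adj_of_orderOf_eq_two hx2 hΨ.orderOf_z
      (hall z (by rintro rfl; exact hΨ.ne_two (hΨ.orderOf_z.symm.trans hx2)))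
  have h2x : 2 ∣ orderOf x := by
    rcases (powerGraph_adj_iff_s16.mp (hall t (by rintro rfl; exact hx2 ht))).2 with hxt | htx
    · rcases eq_one_or_eq_of_mem_zpowers ht hxt with rfl | rfl
      · exact absurd rfl hx
      · exact absurd ht hx2
    · exact ht ▸ orderOf_dvd_of_mem_zpowers htx
  exact hΨ.not_isCyclic (isCyclic_of_forall_adj hΨ.orderOf_ne_four h2x hx2 hall)

theorem eq_one_of_areTwins_one {x : G} (h : AreTwins (powerGraph G) 1 x) : x = 1 := by
  by_contra hx
  obtain ⟨g, hgx, hg⟩ := hΨ.exists_not_adj hx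
  have hg1 : g ≠ 1 := by
    rintro rfl
    exact hg (powerGraph_adj_one hx).symm
  exact hg ((areTwins_iff_forall_adj.mp h g hg1 hgx).mp (powerGraph_adj_one hg1))

theorem eq_of_areTwins_of_orderOf_eq_two {t x : G} (ht : orderOf t = 2)
    (h : AreTwins (powerGraph G) t x) : x = t := by
  by_contra hxt
  have hz := hΨ.orderOf_z
  have hp2 : p ≠ 2 := hΨ.ne_two
  by_cases hx1 : x = 1
  · subst hx1
    have hz1 := hΨ.ne_one_of_orderOf_eq hz
    refine not_areTwins_of_adj_of_not_adj hz1 (by rintro rfl; omega) (powerGraph_adj_one hz1)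
      (hΨ.not_adj_of_orderOf_eq_two ht hz) (areTwins_equivalence.symm h)
  by_cases hx2 : orderOf x = 2
  · obtain ⟨g, hg, htg⟩ := hΨ.exists_orderOf_eq_two_mul t ht
    have hg2 : orderOf g ≠ 2 := by have := hΨ.prime.two_le; omega
    refine not_areTwins_of_adj_of_not_adj (by rintro rfl; exact hg2 ht)
      (by rintro rfl; exact hg2 hx2)
      (powerGraph_adj_iff_s16.mpr ⟨by rintro rfl; exact hg2 ht, Or.inl htg⟩) ?_ h
    rw [powerGraph_adj_iff_s16]
    rintro ⟨-, hxg | hgx⟩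
    · exact hxt (eq_of_mem_zpowers_of_orderOf_eq_two hxg htg hx2 ht)
    · rcases eq_one_or_eq_of_mem_zpowers hx2 hgx with rfl | rfl
      · simp at hg; omega
      · exact hg2 hx2
  have hpx := hΨ.dvd_orderOf hx1 hx2
  obtain ⟨y, hy, hyx⟩ : ∃ y, orderOf y = p ∧ y ≠ x := by
    by_cases hzx : z = x
    · refine ⟨z⁻¹, by rw [orderOf_inv, hz], hzx ▸ inv_ne_self_of_not_orderOf_dvd_two ?_⟩
      rw [hz]
      exact hΨ.not_dvd_two
    · exact ⟨z, hz, hzx⟩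
  exact not_areTwins_of_adj_of_not_adj hyx (by rintro rfl; omega)
    (powerGraph_adj_iff_s16.mpr ⟨hyx.symm, Or.inr (hΨ.mem_zpowers_of_dvd_orderOf hy hpx)⟩)
    (hΨ.not_adj_of_orderOf_eq_two ht hy) (areTwins_equivalence.symm h)

theorem orderOf_eq_of_areTwins {x y : G} (hy : orderOf y = p) (h : AreTwins (powerGraph G) y x) :
    orderOf x = p := by
  by_contra hxp
  have hp2 : p ≠ 2 := hΨ.ne_two
  have hp1 := hΨ.prime.one_lt
  have hxy : x ≠ y := by rintro rfl; exact hxp hy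
  obtain ⟨t, ht⟩ := hΨ.exists_orderOf_eq_two
  by_cases hx1 : x = 1
  · subst hx1
    have ht1 : t ≠ 1 := by rintro rfl; simp at ht
    exact not_areTwins_of_adj_of_not_adj ht1 (by rintro rfl; omega) (powerGraph_adj_one ht1)
      (fun h => hΨ.not_adj_of_orderOf_eq_two ht hy h.symm) (areTwins_equivalence.symm h)
  by_cases hx2 : orderOf x = 2
  · exact hxy.symm (hΨ.eq_of_areTwins_of_orderOf_eq_two hx2 (areTwins_equivalence.symm h))
  by_cases h2x : 2 ∣ orderOf x
  · obtain ⟨s, hs, hsx⟩ : ∃ s, orderOf s = 2 ∧ s ∈ zpowers x :=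
      ⟨_, orderOf_pow_orderOf_div (orderOf_pos x).ne' h2x, pow_mem (mem_zpowers x) _⟩
    have hsx' : s ≠ x := by rintro rfl; exact hx2 hs
    exact not_areTwins_of_adj_of_not_adj hsx' (by rintro rfl; omega)
      (powerGraph_adj_iff_s16.mpr ⟨hsx'.symm, Or.inr hsx⟩)
      (fun h => hΨ.not_adj_of_orderOf_eq_two hs hy h.symm) (areTwins_equivalence.symm h)
  obtain ⟨g, hg, htg⟩ := hΨ.exists_orderOf_eq_two_mul t ht
  refine not_areTwins_of_adj_of_not_adj (w := g) (by rintro rfl; omega) (by rintro rfl; omega)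
    (powerGraph_adj_iff_s16.mpr ⟨by rintro rfl; omega,
      Or.inl (hΨ.mem_zpowers_of_dvd_orderOf hy (hg ▸ dvd_mul_left p 2))⟩) ?_ h
  rw [powerGraph_adj_iff_s16]
  rintro ⟨-, hxg | hgx⟩
  · have hxp' : orderOf x ∣ p := (Nat.Coprime.dvd_of_dvd_mul_left
      ((Nat.prime_two.coprime_iff_not_dvd).mpr h2x).symm (hg ▸ orderOf_dvd_of_mem_zpowers hxg))
    rcases (Nat.dvd_prime hΨ.prime).mp hxp' with h1 | h1
    · exact hx1 (orderOf_eq_one_iff.mp h1)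
    · exact hxp h1
  · exact h2x ((hg ▸ dvd_mul_right 2 p).trans (orderOf_dvd_of_mem_zpowers hgx))

theorem mem_zpowers_of_orderOf_eq_two_mul {w t u : G} (hw : orderOf w = 2 * p)
    (ht : orderOf t = 2) (htw : t ∈ zpowers w) (htu : t ∈ zpowers u) (hpu : p ∣ orderOf u) :
    w ∈ zpowers u := by
  have hw0 : orderOf w ≠ 0 := (orderOf_pos w).ne'
  have hsq : orderOf (w ^ 2) = p := by
    have := orderOf_pow_orderOf_div hw0 (hw ▸ dvd_mul_left p 2)
    rwa [hw, Nat.mul_div_cancel 2 hΨ.prime.pos] at this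
  have hwp : orderOf (w ^ p) = 2 := by
    have := orderOf_pow_orderOf_div hw0 (hw ▸ dvd_mul_right 2 p)
    rwa [hw, Nat.mul_div_cancel_left p two_pos] at this
  refine mem_of_sq_mem_of_pow_mem (hΨ.prime.odd_of_ne_two hΨ.ne_two)
    (hΨ.mem_zpowers_of_dvd_orderOf hsq hpu) ?_
  rw [eq_of_mem_zpowers_of_orderOf_eq_two (pow_mem (mem_zpowers w) p) htw hwp ht]
  exact htu

theorem not_mem_zpowers_of_orderOf_eq_two_mul {w t v : G} (hw : orderOf w = 2 * p)
    (ht : orderOf t = 2) (htw : t ∈ zpowers w) (htv : t ∉ zpowers v) (hv1 : v ≠ 1)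
    (hvt : v ≠ t) (hvz : zpowers v ≠ zpowers z) : v ∉ zpowers w := by
  intro hvw
  obtain ⟨a, b, ha, hb, hab⟩ := Nat.dvd_mul.mp (hw ▸ orderOf_dvd_of_mem_zpowers hvw)
  rcases (Nat.dvd_prime Nat.prime_two).mp ha with rfl | rfl <;>
    rcases (Nat.dvd_prime hΨ.prime).mp hb with rfl | rfl
  · exact hv1 (orderOf_eq_one_iff.mp (by simpa using hab.symm))
  · exact hvz (hΨ.zpowers_eq v (by simpa using hab.symm))
  · exact hvt (eq_of_mem_zpowers_of_orderOf_eq_two hvw htw (by simpa using hab.symm) ht)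
  · have : zpowers v = zpowers w := Subgroup.eq_of_le_of_card_ge (zpowers_le.mpr hvw)
      (by rw [Nat.card_zpowers, Nat.card_zpowers, hw, hab])
    exact htv (this ▸ htw)

theorem exists_adj_not_adj_of_orderOf_eq_two {t u v : G} (ht : orderOf t = 2) (htu : t ≠ u)
    (htv : t ≠ v) (hu : (powerGraph G).Adj u t) (hv : ¬ (powerGraph G).Adj v t)
    (hvz : zpowers v ≠ zpowers z) :
    ∃ w, w⁻¹ ≠ w ∧ w ≠ u ∧ w ≠ v ∧
      (powerGraph G).Adj u w ∧ ¬ (powerGraph G).Adj v w := by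
  have hinv : ∀ w : G, orderOf w = 2 * p → w⁻¹ ≠ w := fun w hw =>
    inv_ne_self_of_not_orderOf_dvd_two fun h => by
      have := Nat.le_of_dvd two_pos (hw ▸ h); have := hΨ.prime.two_le; omega
  obtain ⟨h, hh, hth⟩ := hΨ.exists_orderOf_eq_two_mul t ht
  obtain ⟨w, hw, htw, hwu⟩ : ∃ w, orderOf w = 2 * p ∧ t ∈ zpowers w ∧ w ≠ u := by
    by_cases hhu : h = u
    · exact ⟨h⁻¹, by rw [orderOf_inv, hh], by rwa [zpowers_inv], hhu ▸ hinv h hh⟩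
    · exact ⟨h, hh, hth, hhu⟩
  have htv' : t ∉ zpowers v := fun h => hv (powerGraph_adj_iff_s16.mpr ⟨htv.symm, Or.inr h⟩)
  have hwv : w ≠ v := by rintro rfl; exact htv' htw
  have ht1 : t ≠ 1 := by rintro rfl; simp at ht
  have hv1 : v ≠ 1 := by rintro rfl; exact hv (powerGraph_adj_one ht1)
  have hnadj : ¬ (powerGraph G).Adj v w := by
    rw [powerGraph_adj_iff_s16]
    rintro ⟨-, hvw | hwv'⟩
    · exact hΨ.not_mem_zpowers_of_orderOf_eq_two_mul hw ht htw htv' hv1 htv.symm hvz hvw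
    · exact htv' (zpowers_le.mpr hwv' htw)
  have hadj : (powerGraph G).Adj u w := by
    by_cases hu1 : u = 1
    · subst hu1
      exact powerGraph_adj_one (by rintro rfl; simp at hw; omega)
    have htu' : t ∈ zpowers u := (powerGraph_adj_iff_s16.mp hu).2.resolve_left
      fun hut => (eq_one_or_eq_of_mem_zpowers ht hut).elim hu1 htu.symm
    have hu2 : orderOf u ≠ 2 := fun hu2 =>
      htu (eq_of_mem_zpowers_of_orderOf_eq_two htu' (mem_zpowers u) ht hu2)
    exact powerGraph_adj_iff_s16.mpr ⟨hwu.symm,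
      Or.inr (hΨ.mem_zpowers_of_orderOf_eq_two_mul hw ht htw htu' (hΨ.dvd_orderOf hu1 hu2))⟩
  exact ⟨w, hinv w hw, hwu, hwv, hadj, hnadj⟩

theorem exists_separating_of_not_areTwins {u v : G} (h : ¬ AreTwins (powerGraph G) u v)
    (huz : zpowers u ≠ zpowers z) (hvz : zpowers v ≠ zpowers z) :
    ∃ w, w⁻¹ ≠ w ∧ w ≠ u ∧ w ≠ v ∧
      ¬ ((powerGraph G).Adj u w ↔ (powerGraph G).Adj v w) := by
  obtain ⟨t, htu, htv, hsep⟩ :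
      ∃ t, t ≠ u ∧ t ≠ v ∧ ¬ ((powerGraph G).Adj u t ↔ (powerGraph G).Adj v t) := by
    simpa [areTwins_iff_forall_adj] using h
  by_cases htt : t⁻¹ = t
  swap
  · exact ⟨t, htt, htu, htv, hsep⟩
  have ht1 : t ≠ 1 := by
    rintro rfl
    exact hsep (iff_of_true (powerGraph_adj_one htu.symm).symm (powerGraph_adj_one htv.symm).symm)
  have ht : orderOf t = 2 :=
    orderOf_eq_prime (by rw [pow_two]; exact inv_eq_iff_mul_eq_one.mp htt) ht1
  by_cases hu : (powerGraph G).Adj u t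
  · have hv : ¬ (powerGraph G).Adj v t := fun hv => hsep (iff_of_true hu hv)
    obtain ⟨w, hw, hwu, hwv, hadj, hnadj⟩ :=
      hΨ.exists_adj_not_adj_of_orderOf_eq_two ht htu htv hu hv hvz
    exact ⟨w, hw, hwu, hwv, fun e => hnadj (e.mp hadj)⟩
  · have hv : (powerGraph G).Adj v t := by
      by_contra hv
      exact hsep (iff_of_false hu hv)
    obtain ⟨w, hw, hwv, hwu, hadj, hnadj⟩ :=
      hΨ.exists_adj_not_adj_of_orderOf_eq_two ht htv htu hv hu huz
    exact ⟨w, hw, hwu, hwv, fun e => hnadj (e.mpr hadj)⟩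

theorem not_isResolvingSet {W : Set G} {y : G} (h1 : 1 ∉ W) (hy : orderOf y = p) (hyW : y ∉ W)
    (hinv : ∀ t : G, orderOf t = 2 → t ∉ W) : ¬ IsResolvingSet (powerGraph G) W := by
  intro hW
  have hy1 := hΨ.ne_one_of_orderOf_eq hy
  obtain ⟨w, hwW, hw⟩ := hW 1 y hy1.symm
  have hw1 : w ≠ 1 := fun e => h1 (e ▸ hwW)
  have hwy : w ≠ y := fun e => hyW (e ▸ hwW)
  have hyw : y ∈ zpowers w :=
    hΨ.mem_zpowers_of_dvd_orderOf hy (hΨ.dvd_orderOf hw1 fun hw2 => hinv w hw2 hwW)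
  refine hw ((dist_eq_dist_iff_of_forall_adj (fun _ => powerGraph_adj_one) hw1 hwy).mpr
    (iff_of_true (powerGraph_adj_one hw1) (powerGraph_adj_iff_s16.mpr ⟨hwy.symm, Or.inl hyw⟩)))

theorem le_ncard_of_isResolvingSet {W : Set G} (hW : IsResolvingSet (powerGraph G) W) :
    Fintype.card G - twinClassCount (powerGraph G) + 1 ≤ W.ncard := by
  have hinj := hW.injOn_twinClass_compl fun _ => powerGraph_adj_one
  have hsum : W.ncard + Wᶜ.ncard = Fintype.card G := by
    rw [Set.ncard_add_ncard_compl, Nat.card_eq_fintype_card]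
  have hle := hinj.ncard_le_twinClassCount
  have hU := twinClassCount_le_card (Γ := powerGraph G)
  have hne : Wᶜ.ncard ≠ twinClassCount (powerGraph G) := fun heq => by
    have htwin := hinj.exists_areTwins_of_ncard_eq heq
    obtain ⟨a, haW, ha⟩ := htwin 1
    obtain ⟨y, hyW, hy⟩ := htwin z
    refine hΨ.not_isResolvingSet ?_ (hΨ.orderOf_eq_of_areTwins hΨ.orderOf_z hy) hyW ?_ hW
    · rwa [hΨ.eq_one_of_areTwins_one ha] at haW
    · intro t ht
      obtain ⟨a, haW, ha⟩ := htwin t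
      rwa [hΨ.eq_of_areTwins_of_orderOf_eq_two ht ha] at haW
  omega

theorem exists_isResolvingSet_ncard_eq : ∃ W : Set G, IsResolvingSet (powerGraph G) W ∧
    W.ncard = Fintype.card G - twinClassCount (powerGraph G) + 1 := by
  obtain ⟨T, hinj, hcard⟩ := exists_injOn_twinClass_ncard_eq (Γ := powerGraph G)
  obtain ⟨z', hz'T, hz'⟩ := hinj.exists_areTwins_of_ncard_eq hcard z
  have hinj' := hinj.mono (Set.sdiff_subset (t := {z'}))
  refine ⟨(T \ {z'})ᶜ,
    isResolvingSet_compl_of_injOn (fun _ => powerGraph_adj_one) hinj' ?_, ?_⟩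
  · intro u hu v hv huv
    have hzpowers : ∀ x ∈ T \ {z'}, zpowers x ≠ zpowers z := fun x hx hxz =>
      hx.2 (hinj hx.1 hz'T (twinClass_eq_twinClass_iff.mpr
        (areTwins_equivalence.trans (powerGraph_areTwins_of_zpowers_eq hxz) hz')))
    obtain ⟨w, hw, hwu, hwv, hsep⟩ := hΨ.exists_separating_of_not_areTwins
      (fun h => huv (hinj' hu hv (twinClass_eq_twinClass_iff.mpr h)))
      (hzpowers u hu) (hzpowers v hv)
    exact ⟨w, w⁻¹, hw, powerGraph_areTwins_of_zpowers_eq zpowers_inv.symm, hwu, hwv, hsep⟩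
  · have hsum := Set.ncard_add_ncard_compl (T \ {z'})
    rw [Set.ncard_sdiff_singleton_of_mem hz'T, hcard, Nat.card_eq_fintype_card] at hsum
    have hU := twinClassCount_le_card (Γ := powerGraph G)
    have hpos := (Set.ncard_pos (s := T)).mpr ⟨z', hz'T⟩
    omega

end InPsiWith

/-- If `G ∈ Ψ`, then `β(P_G) = |G| - |U(P_G)| + 1`. -/
theorem metricDim_powerGraph_of_inPsi
    (G : Type*) [Group G] [Fintype G] (hG : InPsi G) :
    metricDim (powerGraph G)
      = Fintype.card G - twinClassCount (powerGraph G) + 1 := by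
  obtain ⟨p, z, hΨ⟩ := hG.exists_inPsiWith
  obtain ⟨W, hW, hcard⟩ := hΨ.exists_isResolvingSet_ncard_eq
  rw [metricDim_eq_ncard hW fun W' hW' => hcard ▸ hΨ.le_ncard_of_isResolvingSet hW', hcard]
end

section
/- Let G be a cyclic group of order p^m for a prime p and positive integer m. Then the power graph P_G is a complete graph on |G| vertices. -/
open SimpleGraph

lemma aux_mem_zpowers {G : Type*} [Group G] [Fintype G] {x y : G}
    (h : x ∈ Subgroup.zpowers y) : ∃ n : ℕ, 0 < n ∧ x = y ^ n := by
  rw [← mem_powers_iff_mem_zpowers] at h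
  obtain ⟨n, rfl⟩ := h
  rcases Nat.eq_zero_or_pos n with rfl | hn
  · exact ⟨orderOf y, orderOf_pos y, by simp [pow_orderOf_eq_one]⟩
  · exact ⟨n, hn, rfl⟩

lemma aux_key {G : Type*} [Group G] [Fintype G] (hG : IsCyclic G)
    {x y : G} (h : orderOf x ∣ orderOf y) : x ∈ Subgroup.zpowers y := by
  classical
  have hle := IsCyclic.card_pow_eq_one_le (α := G) (n := orderOf y) (orderOf_pos y)
  have hsub : (Subgroup.zpowers y : Set G).toFinset ⊆ {a : G | a ^ orderOf y = 1}.toFinset := by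
    intro a ha
    simp only [Set.mem_toFinset, Set.mem_setOf_eq] at *
    obtain ⟨k, hk⟩ := ha
    simp only [← hk]
    rw [← zpow_natCast, ← zpow_mul, mul_comm, zpow_mul, zpow_natCast,
      pow_orderOf_eq_one, one_zpow]
  have hcard : ((Subgroup.zpowers y : Set G).toFinset).card = orderOf y := by
    rw [Set.toFinset_card]
    exact Fintype.card_zpowers
  have heq : (Subgroup.zpowers y : Set G).toFinset = {a : G | a ^ orderOf y = 1}.toFinset := by
    apply Finset.eq_of_subset_of_card_le hsub
    simpa [hcard] using hle
  have hx : x ∈ {a : G | a ^ orderOf y = 1}.toFinset := by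
    simp only [Set.mem_toFinset, Set.mem_setOf_eq]
    exact orderOf_dvd_iff_pow_eq_one.mp h
  rw [← heq] at hx
  simpa using hx

/-- The power graph of a cyclic group of prime power order is
complete. -/
theorem powerGraph_cyclic_primePower_complete
    (G : Type*) [Group G] [Fintype G] (hG : IsCyclic G)
    (p m : ℕ) (hp : p.Prime) (hm : 1 ≤ m) (hcard : Fintype.card G = p ^ m) :
    powerGraph G = ⊤ := by
  ext x y
  simp only [SimpleGraph.top_adj, powerGraph, SimpleGraph.fromRel_adj]
  constructor
  · rintro ⟨hne, -⟩; exact hne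
  · intro hne
    refine ⟨hne, ?_⟩
    have hx : orderOf x ∣ p ^ m := hcard ▸ orderOf_dvd_card
    have hy : orderOf y ∣ p ^ m := hcard ▸ orderOf_dvd_card
    obtain ⟨i, hi, hxi⟩ := (Nat.dvd_prime_pow hp).mp hx
    obtain ⟨j, hj, hyj⟩ := (Nat.dvd_prime_pow hp).mp hy
    rcases le_total i j with hij | hij
    · right
      have : orderOf x ∣ orderOf y := by
        rw [hxi, hyj]; exact pow_dvd_pow p hij
      obtain ⟨n, hn, he⟩ := aux_mem_zpowers (aux_key hG this)
      exact ⟨n, hn, he⟩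
    · left
      have : orderOf y ∣ orderOf x := by
        rw [hxi, hyj]; exact pow_dvd_pow p hij
      obtain ⟨n, hn, he⟩ := aux_mem_zpowers (aux_key hG this)
      exact ⟨n, hn, he⟩
end
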